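/- arXiv:2310.16171 — 9 statements merged into one kernel-verified Lean document; each statement's English description precedes it below -/
import Mathlib

section
/- Let λ1, λ2 ≥ 0, let m ≤ M be reals, and let u, v, ω be grid functions such that: (i) m ≤ ω_{i,j} ≤ M for all i,j; (ii) λ1·max_{i,j}|u_{i,j}| + λ2·max_{i,j}|v_{i,j}| ≤ 1/3; (iii) the discrete divergence-free condition λ1·(D_x W_{1y} u)_{i,j} + λ2·(D_y W_{1x} v)_{i,j} = 0 holds for all i,j. Then the updated weighted averages of the fourth-order compact finite difference scheme with forward Euler time stepping, namely L(ω)_{i,j} = (W_{1x}W_{1y}ω)_{i,j} − λ1·(W_{1y}D_x(u∘ω))_{i,j} − λ2·(W_{1x}D_y(v∘ω))_{i,j}, satisfy m ≤ L(ω)_{i,j} ≤ M for all i,j. -/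
noncomputable section

/-- Grid functions with periodic indexing. -/
abbrev Grid (Nx Ny : ℕ) : Type := ZMod Nx × ZMod Ny → ℝ

variable {Nx Ny : ℕ}

/-- `(W_{1x}f)_{i,j} = (f_{i-1,j} + 4f_{i,j} + f_{i+1,j})/6` -/
def W1x (f : Grid Nx Ny) : Grid Nx Ny :=
  fun p => (f (p.1 - 1, p.2) + 4 * f p + f (p.1 + 1, p.2)) / 6

/-- `(W_{1y}f)_{i,j} = (f_{i,j-1} + 4f_{i,j} + f_{i,j+1})/6` -/
def W1y (f : Grid Nx Ny) : Grid Nx Ny :=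
  fun p => (f (p.1, p.2 - 1) + 4 * f p + f (p.1, p.2 + 1)) / 6

/-- `(D_x f)_{i,j} = (f_{i+1,j} − f_{i-1,j})/2` -/
def Dx (f : Grid Nx Ny) : Grid Nx Ny :=
  fun p => (f (p.1 + 1, p.2) - f (p.1 - 1, p.2)) / 2

/-- `(D_y f)_{i,j} = (f_{i,j+1} − f_{i,j-1})/2` -/
def Dy (f : Grid Nx Ny) : Grid Nx Ny :=
  fun p => (f (p.1, p.2 + 1) - f (p.1, p.2 - 1)) / 2

/-- Entrywise (Hadamard) product of grid functions. -/
def had (f g : Grid Nx Ny) : Grid Nx Ny := fun p => f p * g p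

/-- Maximum of a grid function over all grid points. -/
def gridSup [NeZero Nx] [NeZero Ny] (f : Grid Nx Ny) : ℝ :=
  Finset.univ.sup' ⟨((0 : ZMod Nx), (0 : ZMod Ny)), Finset.mem_univ _⟩ f

/-- The forward Euler update of the weighted averages:
`L(ω) = W_{1x}W_{1y}ω − λ1·W_{1y}D_x(u∘ω) − λ2·W_{1x}D_y(v∘ω)`. -/
def Lscheme (lam1 lam2 : ℝ) (u v ω : Grid Nx Ny) : Grid Nx Ny :=
  fun p => W1x (W1y ω) p - lam1 * W1y (Dx (had u ω)) p - lam2 * W1x (Dy (had v ω)) p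

set_option maxHeartbeats 2000000 in
/-- Bound preservation of the fourth-order compact finite difference scheme
with forward Euler time stepping, under the CFL condition and the discrete
divergence-free constraint `λ1·(D_x W_{1y} u) + λ2·(D_y W_{1x} v) = 0`. -/
theorem bound_preserving {Nx Ny : ℕ} [NeZero Nx] [NeZero Ny]
    (hNx : 5 ≤ Nx) (hNy : 5 ≤ Ny)
    (lam1 lam2 : ℝ) (hlam1 : 0 ≤ lam1) (hlam2 : 0 ≤ lam2)
    (m M : ℝ) (hmM : m ≤ M)
    (u v ω : Grid Nx Ny)
    (hbound : ∀ p, m ≤ ω p ∧ ω p ≤ M)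
    (hCFL : lam1 * gridSup (fun p => |u p|) + lam2 * gridSup (fun p => |v p|) ≤ 1 / 3)
    (hdivfree : ∀ p, lam1 * Dx (W1y u) p + lam2 * Dy (W1x v) p = 0) :
    ∀ p, m ≤ Lscheme lam1 lam2 u v ω p ∧ Lscheme lam1 lam2 u v ω p ≤ M := by
  intro p
  obtain ⟨i, j⟩ := p
  set su := gridSup (fun p => |u p|) with hsu_def
  set sv := gridSup (fun p => |v p|) with hsv_def
  have huq : ∀ q, |u q| ≤ su := fun q => Finset.le_sup' (fun p => |u p|) (Finset.mem_univ q)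
  have hvq : ∀ q, |v q| ≤ sv := fun q => Finset.le_sup' (fun p => |v p|) (Finset.mem_univ q)
  have hsu0 : 0 ≤ su := le_trans (abs_nonneg _) (huq (0, 0))
  have hsv0 : 0 ≤ sv := le_trans (abs_nonneg _) (hvq (0, 0))
  have hsu1 : lam1 * su ≤ 1 / 3 := by nlinarith [mul_nonneg hlam2 hsv0]
  have hsv1 : lam2 * sv ≤ 1 / 3 := by nlinarith [mul_nonneg hlam1 hsu0]
  have hU1 : ∀ q, lam1 * u q ≤ lam1 * su := fun q =>
    mul_le_mul_of_nonneg_left (le_trans (le_abs_self _) (huq q)) hlam1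
  have hU2 : ∀ q, lam1 * (-su) ≤ lam1 * u q := fun q =>
    mul_le_mul_of_nonneg_left (le_trans (by linarith [huq q, neg_abs_le (u q)]) le_rfl) hlam1
  have hV1 : ∀ q, lam2 * v q ≤ lam2 * sv := fun q =>
    mul_le_mul_of_nonneg_left (le_trans (le_abs_self _) (hvq q)) hlam2
  have hV2 : ∀ q, lam2 * (-sv) ≤ lam2 * v q := fun q =>
    mul_le_mul_of_nonneg_left (le_trans (by linarith [hvq q, neg_abs_le (v q)]) le_rfl) hlam2
  have hCFLs : lam1 * su + lam2 * sv ≤ 1 / 3 := hCFL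
  -- nonnegativity of the nine stencil coefficients
  have hc00 : (0:ℝ) ≤ 4 / 9 := by norm_num
  have hcpo : 0 ≤ 1 / 9 - lam1 * u (i + 1, j) / 3 := by
    linarith [hU1 (i + 1, j), mul_nonneg hlam2 hsv0]
  have hcmo : 0 ≤ 1 / 9 + lam1 * u (i - 1, j) / 3 := by
    linarith [hU2 (i - 1, j), mul_nonneg hlam2 hsv0]
  have hcop : 0 ≤ 1 / 9 - lam2 * v (i, j + 1) / 3 := by
    linarith [hV1 (i, j + 1), mul_nonneg hlam1 hsu0]
  have hcom : 0 ≤ 1 / 9 + lam2 * v (i, j - 1) / 3 := by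
    linarith [hV2 (i, j - 1), mul_nonneg hlam1 hsu0]
  have hcpp : 0 ≤ 1 / 36 - lam1 * u (i + 1, j + 1) / 12 - lam2 * v (i + 1, j + 1) / 12 := by
    linarith [hU1 (i + 1, j + 1), hV1 (i + 1, j + 1)]
  have hcpm : 0 ≤ 1 / 36 - lam1 * u (i + 1, j - 1) / 12 + lam2 * v (i + 1, j - 1) / 12 := by
    linarith [hU1 (i + 1, j - 1), hV2 (i + 1, j - 1)]
  have hcmp : 0 ≤ 1 / 36 + lam1 * u (i - 1, j + 1) / 12 - lam2 * v (i - 1, j + 1) / 12 := by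
    linarith [hU2 (i - 1, j + 1), hV1 (i - 1, j + 1)]
  have hcmm : 0 ≤ 1 / 36 + lam1 * u (i - 1, j - 1) / 12 + lam2 * v (i - 1, j - 1) / 12 := by
    linarith [hU2 (i - 1, j - 1), hV2 (i - 1, j - 1)]
  have hd := hdivfree (i, j)
  simp only [Dx, Dy, W1x, W1y] at hd
  -- key convex-combination identities
  have hkeyL : Lscheme lam1 lam2 u v ω (i, j) - m =
      (4 / 9) * (ω (i, j) - m)
      + (1 / 9 - lam1 * u (i + 1, j) / 3) * (ω (i + 1, j) - m)
      + (1 / 9 + lam1 * u (i - 1, j) / 3) * (ω (i - 1, j) - m)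
      + (1 / 9 - lam2 * v (i, j + 1) / 3) * (ω (i, j + 1) - m)
      + (1 / 9 + lam2 * v (i, j - 1) / 3) * (ω (i, j - 1) - m)
      + (1 / 36 - lam1 * u (i + 1, j + 1) / 12 - lam2 * v (i + 1, j + 1) / 12) * (ω (i + 1, j + 1) - m)
      + (1 / 36 - lam1 * u (i + 1, j - 1) / 12 + lam2 * v (i + 1, j - 1) / 12) * (ω (i + 1, j - 1) - m)
      + (1 / 36 + lam1 * u (i - 1, j + 1) / 12 - lam2 * v (i - 1, j + 1) / 12) * (ω (i - 1, j + 1) - m)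
      + (1 / 36 + lam1 * u (i - 1, j - 1) / 12 + lam2 * v (i - 1, j - 1) / 12) * (ω (i - 1, j - 1) - m) := by
    simp only [Lscheme, W1x, W1y, Dx, Dy, had]
    linear_combination (-m) * hd
  have hkeyU : M - Lscheme lam1 lam2 u v ω (i, j) =
      (4 / 9) * (M - ω (i, j))
      + (1 / 9 - lam1 * u (i + 1, j) / 3) * (M - ω (i + 1, j))
      + (1 / 9 + lam1 * u (i - 1, j) / 3) * (M - ω (i - 1, j))
      + (1 / 9 - lam2 * v (i, j + 1) / 3) * (M - ω (i, j + 1))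
      + (1 / 9 + lam2 * v (i, j - 1) / 3) * (M - ω (i, j - 1))
      + (1 / 36 - lam1 * u (i + 1, j + 1) / 12 - lam2 * v (i + 1, j + 1) / 12) * (M - ω (i + 1, j + 1))
      + (1 / 36 - lam1 * u (i + 1, j - 1) / 12 + lam2 * v (i + 1, j - 1) / 12) * (M - ω (i + 1, j - 1))
      + (1 / 36 + lam1 * u (i - 1, j + 1) / 12 - lam2 * v (i - 1, j + 1) / 12) * (M - ω (i - 1, j + 1))
      + (1 / 36 + lam1 * u (i - 1, j - 1) / 12 + lam2 * v (i - 1, j - 1) / 12) * (M - ω (i - 1, j - 1)) := by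
    simp only [Lscheme, W1x, W1y, Dx, Dy, had]
    linear_combination M * hd
  constructor
  · linarith [hkeyL,
      mul_nonneg hc00 (sub_nonneg.2 (hbound (i, j)).1),
      mul_nonneg hcpo (sub_nonneg.2 (hbound (i + 1, j)).1),
      mul_nonneg hcmo (sub_nonneg.2 (hbound (i - 1, j)).1),
      mul_nonneg hcop (sub_nonneg.2 (hbound (i, j + 1)).1),
      mul_nonneg hcom (sub_nonneg.2 (hbound (i, j - 1)).1),
      mul_nonneg hcpp (sub_nonneg.2 (hbound (i + 1, j + 1)).1),
      mul_nonneg hcpm (sub_nonneg.2 (hbound (i + 1, j - 1)).1),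
      mul_nonneg hcmp (sub_nonneg.2 (hbound (i - 1, j + 1)).1),
      mul_nonneg hcmm (sub_nonneg.2 (hbound (i - 1, j - 1)).1)]
  · linarith [hkeyU,
      mul_nonneg hc00 (sub_nonneg.2 (hbound (i, j)).2),
      mul_nonneg hcpo (sub_nonneg.2 (hbound (i + 1, j)).2),
      mul_nonneg hcmo (sub_nonneg.2 (hbound (i - 1, j)).2),
      mul_nonneg hcop (sub_nonneg.2 (hbound (i, j + 1)).2),
      mul_nonneg hcom (sub_nonneg.2 (hbound (i, j - 1)).2),
      mul_nonneg hcpp (sub_nonneg.2 (hbound (i + 1, j + 1)).2),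
      mul_nonneg hcpm (sub_nonneg.2 (hbound (i + 1, j - 1)).2),
      mul_nonneg hcmp (sub_nonneg.2 (hbound (i - 1, j + 1)).2),
      mul_nonneg hcmm (sub_nonneg.2 (hbound (i - 1, j - 1)).2)]
end
end

section
/- Let λ1, λ2 ≥ 0, reals m ≤ M, a threshold τ ≥ 0, and grid functions ω, u⁺, u⁻, v⁺, v⁻ with u⁺_{i,j} ≥ 0, u⁻_{i,j} ≤ 0, v⁺_{i,j} ≥ 0, v⁻_{i,j} ≤ 0 and m ≤ ω_{i,j} ≤ M for all i,j. Set u = u⁺ + u⁻, v = v⁺ + v⁻. Assume the CFL condition λ1·max_{i,j} max(u⁺_{i,j}, −u⁻_{i,j}) ≤ 1/24 and λ2·max_{i,j} max(v⁺_{i,j}, −v⁻_{i,j}) ≤ 1/24, and the discrete divergence-free condition λ1·(D_x W_{1y} u)_{i,j} + λ2·(D_y W_{1x} v)_{i,j} = 0 for all i,j. Write ω̄ = W_{1x}W_{1y}ω. Define, for the x-direction: dĝ⁺_{i+1/2,j} = (u⁺ω)̂_{i+1/2,j} − û⁺_{i+1/2,j}·ω̄_{i,j}; dĝ⁻_{i+1/2,j}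 = û⁻_{i+1/2,j}·ω̄_{i+1,j} − (u⁻ω)̂_{i+1/2,j}; dĝ^{+(m)}_{i+1/2,j} = m̃(dĝ⁺_{i+1/2,j}, û⁺_{i+1/2,j}(ω̄_{i+1,j}−ω̄_{i,j}), û⁺_{i−1/2,j}(ω̄_{i,j}−ω̄_{i−1,j})); dĝ^{−(m)}_{i+1/2,j} = m̃(dĝ⁻_{i+1/2,j}, û⁻_{i+1/2,j}(ω̄_{i+1,j}−ω̄_{i,j}), û⁻_{i+3/2,j}(ω̄_{i+2,j}−ω̄_{i+1,j})); and the limited flux ĝ^{(m)}_{i+1/2,j} = û⁺_{i+1/2,j}·ω̄_{i,j} + dĝ^{+(m)}_{i+1/2,j} + û⁻_{i+1/2,j}·ω̄_{i+1,j} − dĝ^{−(m)}_{i+1/2,j}. Define the y-direction limited flux ĥ^{(m)}_{i,j+1/2} by the same formulas with u± replaced by v±, x-fluxes replaced by y-fluxes, and the shifts applied to the second index. Then for all i,j: m ≤ ω̄_{i,j} − λ1(ĝ^{(m)}_{i+1/2,j} − ĝ^{(m)}_{i−1/2,j}) − λ2(ĥ^{(m)}_{i,j+1/2} − ĥ^{(m)}_{i,j−1/2})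 ≤ M. -/
noncomputable section

variable {Nx Ny : ℕ}

/-- x-direction flux: `f̂_{i+1/2,j} = ((W_{1y}f)_{i,j} + (W_{1y}f)_{i+1,j})/2`,
recorded at the integer index `(i,j)`. -/
def fluxX (f : Grid Nx Ny) : Grid Nx Ny :=
  fun p => (W1y f p + W1y f (p.1 + 1, p.2)) / 2

/-- y-direction flux: `f̂_{i,j+1/2} = ((W_{1x}f)_{i,j} + (W_{1x}f)_{i,j+1})/2`,
recorded at the integer index `(i,j)`. -/
def fluxY (f : Grid Nx Ny) : Grid Nx Ny :=
  fun p => (W1x f p + W1x f (p.1, p.2 + 1)) / 2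

/-- The minmod function of three numbers: `s·min |aᵢ|` if all arguments are
nonzero with the common sign `s`, and `0` otherwise. -/
def minmod3 (a b c : ℝ) : ℝ :=
  if 0 < a ∧ 0 < b ∧ 0 < c then min a (min b c)
  else if a < 0 ∧ b < 0 ∧ c < 0 then max a (max b c)
  else 0

/-- The modified minmod function with threshold `τ`. -/
def mminmod3 (τ a b c : ℝ) : ℝ := if |a| ≤ τ then a else minmod3 a b c

/-- The TVB-limited x-direction flux `ĝ^{(m)}_{i+1/2,j}`, recorded at the
integer index `(i,j)`. -/
def limitedFluxX (τ : ℝ) (up um ω : Grid Nx Ny) : Grid Nx Ny := fun q =>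
  let ωb := W1x (W1y ω)
  let uhp := fluxX up
  let uhm := fluxX um
  let gp := fluxX (had up ω)
  let gm := fluxX (had um ω)
  let dgp : Grid Nx Ny := fun p => gp p - uhp p * ωb p
  let dgm : Grid Nx Ny := fun p => uhm p * ωb (p.1 + 1, p.2) - gm p
  let dgpM : Grid Nx Ny := fun p =>
    mminmod3 τ (dgp p) (uhp p * (ωb (p.1 + 1, p.2) - ωb p))
      (uhp (p.1 - 1, p.2) * (ωb p - ωb (p.1 - 1, p.2)))
  let dgmM : Grid Nx Ny := fun p =>
    mminmod3 τ (dgm p) (uhm p * (ωb (p.1 + 1, p.2) - ωb p))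
      (uhm (p.1 + 1, p.2) * (ωb (p.1 + 2, p.2) - ωb (p.1 + 1, p.2)))
  uhp q * ωb q + dgpM q + uhm q * ωb (q.1 + 1, q.2) - dgmM q

/-- The TVB-limited y-direction flux `ĥ^{(m)}_{i,j+1/2}`, recorded at the
integer index `(i,j)`. -/
def limitedFluxY (τ : ℝ) (vp vm ω : Grid Nx Ny) : Grid Nx Ny := fun q =>
  let ωb := W1x (W1y ω)
  let vhp := fluxY vp
  let vhm := fluxY vm
  let hp := fluxY (had vp ω)
  let hm := fluxY (had vm ω)
  let dhp : Grid Nx Ny := fun p => hp p - vhp p * ωb p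
  let dhm : Grid Nx Ny := fun p => vhm p * ωb (p.1, p.2 + 1) - hm p
  let dhpM : Grid Nx Ny := fun p =>
    mminmod3 τ (dhp p) (vhp p * (ωb (p.1, p.2 + 1) - ωb p))
      (vhp (p.1, p.2 - 1) * (ωb p - ωb (p.1, p.2 - 1)))
  let dhmM : Grid Nx Ny := fun p =>
    mminmod3 τ (dhm p) (vhm p * (ωb (p.1, p.2 + 1) - ωb p))
      (vhm (p.1, p.2 + 1) * (ωb (p.1, p.2 + 2) - ωb (p.1, p.2 + 1)))
  vhp q * ωb q + dhpM q + vhm q * ωb (q.1, q.2 + 1) - dhmM q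


/-! ### Auxiliary lemmas -/

section Aux

lemma mm_ge_b (a b c : ℝ) : min 0 b ≤ minmod3 a b c := by
  unfold minmod3
  split_ifs with h1 h2
  · exact (min_le_left 0 b).trans (le_min h1.1.le (le_min h1.2.1.le h1.2.2.le))
  · exact (min_le_right 0 b).trans ((le_max_left b c).trans (le_max_right a _))
  · exact min_le_left _ _

lemma mm_le_c (a b c : ℝ) : minmod3 a b c ≤ max 0 c := by
  unfold minmod3
  split_ifs with h1 h2
  · exact ((min_le_right a _).trans (min_le_right b c)).trans (le_max_right 0 c)
  · exact (max_le h2.1.le (max_le h2.2.1.le h2.2.2.le)).trans (le_max_left 0 c)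
  · exact le_max_left _ _

lemma sub_mm_le (a b c : ℝ) : b - minmod3 a b c ≤ max 0 b := by
  have h := mm_ge_b a b c
  rcases le_total b 0 with hb | hb
  · rw [min_eq_right hb] at h
    exact (by linarith : b - minmod3 a b c ≤ 0).trans (le_max_left _ _)
  · rw [min_eq_left hb] at h
    calc b - minmod3 a b c ≤ b := by linarith
      _ ≤ max 0 b := le_max_right _ _

lemma minmod3_neg (a b c : ℝ) : minmod3 (-a) (-b) (-c) = -minmod3 a b c := by
  unfold minmod3
  simp only [neg_pos, neg_lt_zero]
  split_ifs with h1 h2 h3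
  · obtain ⟨x, -, -⟩ := h1; obtain ⟨y, -, -⟩ := h2; linarith
  · rw [min_neg_neg, min_neg_neg]
  · rw [max_neg_neg, max_neg_neg]
  · simp

lemma mminmod3_neg (τ a b c : ℝ) : mminmod3 τ (-a) (-b) (-c) = -mminmod3 τ a b c := by
  simp only [mminmod3, abs_neg]
  split_ifs with h
  · rfl
  · exact minmod3_neg a b c

/-- The central one-dimensional estimate: the contribution of one direction to the
scheme, after subtracting the divergence part, is at most `5/12` of `wb0 - m`. -/
lemma tvb_core (lam m τ sp_p sp_m sm_p sm_m wbm wb0 wbp am1 a0 a1 gp_p gp_m gm_p gm_m x1 x2 : ℝ)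
    (hlam : 0 ≤ lam)
    (hsp_p : 0 ≤ sp_p) (hsp_m : 0 ≤ sp_m) (hsm_p : sm_p ≤ 0) (hsm_m : sm_m ≤ 0)
    (hc2 : lam * sp_m ≤ 1/24) (hc3 : lam * (-sm_p) ≤ 1/24)
    (hwm : m ≤ wbm) (hwp : m ≤ wbp)
    (ham1 : m ≤ am1) (ha0 : m ≤ a0) (ha1 : m ≤ a1)
    (hrep : wb0 = (am1 + 4*a0 + a1)/6)
    (hgp_p : lam * (gp_p - m * sp_p) ≤ 1/48 * ((a0 - m) + (a1 - m)))
    (hgp_m : 0 ≤ gp_m - m * sp_m)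
    (hgm_p : gm_p - m * sm_p ≤ 0)
    (hgm_m : lam * (m * sm_m - gm_m) ≤ 1/48 * ((am1 - m) + (a0 - m))) :
    lam * (sm_p * (wbp - wb0) + sp_m * (wb0 - wbm)
      + mminmod3 τ (gp_p - sp_p * wb0) (sp_p * (wbp - wb0)) (sp_m * (wb0 - wbm))
      - mminmod3 τ (gp_m - sp_m * wbm) (sp_m * (wb0 - wbm)) x1
      - mminmod3 τ (sm_p * wbp - gm_p) (sm_p * (wbp - wb0)) x2
      + mminmod3 τ (sm_m * wb0 - gm_m) (sm_m * (wb0 - wbm)) (sm_p * (wbp - wb0)))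
    ≤ 5/12 * (wb0 - m) := by
  have hw0 : m ≤ wb0 := by rw [hrep]; linarith
  have hΩ : (0:ℝ) ≤ wb0 - m := by linarith
  have hsm_p' : (0:ℝ) ≤ -sm_p := by linarith
  have k1 : lam * (-sm_p) * (wb0 - m) ≤ 1/24 * (wb0 - m) := mul_le_mul_of_nonneg_right hc3 hΩ
  have k2 : lam * sp_m * (wb0 - m) ≤ 1/24 * (wb0 - m) := mul_le_mul_of_nonneg_right hc2 hΩ
  have k3 : (0:ℝ) ≤ (-sm_p) * (wb0 - m) := mul_nonneg hsm_p' hΩ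
  have k4 : (0:ℝ) ≤ sp_m * (wb0 - m) := mul_nonneg hsp_m hΩ
  have k5 : sm_p * (wbp - m) ≤ 0 := mul_nonpos_of_nonpos_of_nonneg hsm_p (by linarith)
  have k6 : sp_m * (wbm - m) ≥ 0 := mul_nonneg hsp_m (by linarith)
  have hmaxp : max 0 (sm_p * (wbp - wb0)) ≤ (-sm_p) * (wb0 - m) := by
    apply max_le k3; linarith [k5]
  have hmaxm : max 0 (sp_m * (wb0 - wbm)) ≤ sp_m * (wb0 - m) := by
    apply max_le k4; linarith [k6]
  have hb1 : lam * (sm_p * (wbp - wb0) - mminmod3 τ (sm_p * wbp - gm_p) (sm_p * (wbp - wb0)) x2)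
      ≤ 1/24 * (wb0 - m) := by
    simp only [mminmod3]; split_ifs with h
    · have h1 : (0:ℝ) ≤ lam * (m * sm_p - gm_p) := mul_nonneg hlam (by linarith)
      linarith [k1, h1]
    · have hle := (sub_mm_le (sm_p * wbp - gm_p) (sm_p * (wbp - wb0)) x2).trans hmaxp
      have := mul_le_mul_of_nonneg_left hle hlam
      linarith [k1, this]
  have hb2 : lam * (sp_m * (wb0 - wbm) - mminmod3 τ (gp_m - sp_m * wbm) (sp_m * (wb0 - wbm)) x1)
      ≤ 1/24 * (wb0 - m) := by
    simp only [mminmod3]; split_ifs with h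
    · have h1 : (0:ℝ) ≤ lam * (gp_m - m * sp_m) := mul_nonneg hlam hgp_m
      linarith [k2, h1]
    · have hle := (sub_mm_le (gp_m - sp_m * wbm) (sp_m * (wb0 - wbm)) x1).trans hmaxm
      have := mul_le_mul_of_nonneg_left hle hlam
      linarith [k2, this]
  have hb3 : lam * mminmod3 τ (gp_p - sp_p * wb0) (sp_p * (wbp - wb0)) (sp_m * (wb0 - wbm))
      ≤ 1/24 * (wb0 - m) + 1/48 * ((a0 - m) + (a1 - m)) := by
    simp only [mminmod3]; split_ifs with h
    · have h1 : (0:ℝ) ≤ lam * sp_p * (wb0 - m) := mul_nonneg (mul_nonneg hlam hsp_p) hΩ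
      linarith [hgp_p, h1]
    · have hle := (mm_le_c (gp_p - sp_p * wb0) (sp_p * (wbp - wb0)) (sp_m * (wb0 - wbm))).trans hmaxm
      have := mul_le_mul_of_nonneg_left hle hlam
      linarith [k2, this]
  have hb4 : lam * mminmod3 τ (sm_m * wb0 - gm_m) (sm_m * (wb0 - wbm)) (sm_p * (wbp - wb0))
      ≤ 1/24 * (wb0 - m) + 1/48 * ((am1 - m) + (a0 - m)) := by
    simp only [mminmod3]; split_ifs with h
    · have h1 : (0:ℝ) ≤ lam * (-sm_m) * (wb0 - m) := mul_nonneg (mul_nonneg hlam (by linarith)) hΩ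
      linarith [hgm_m, h1]
    · have hle := (mm_le_c (sm_m * wb0 - gm_m) (sm_m * (wb0 - wbm)) (sm_p * (wbp - wb0))).trans hmaxp
      have := mul_le_mul_of_nonneg_left hle hlam
      linarith [k1, this]
  have h6 : 6 * (wb0 - m) = (am1 - m) + 4*(a0 - m) + (a1 - m) := by rw [hrep]; ring
  linarith [hb1, hb2, hb3, hb4, h6, ham1, ha0, ha1]

variable {Nx Ny : ℕ}
variable {m lam c : ℝ} {f ω : Grid Nx Ny}

lemma W1y_ge (h : ∀ p, m ≤ ω p) (p) : m ≤ W1y ω p := by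
  have h1 := h (p.1, p.2 - 1); have h2 := h p; have h3 := h (p.1, p.2 + 1)
  simp only [W1y]; linarith

lemma W1x_ge (h : ∀ p, m ≤ ω p) (p) : m ≤ W1x ω p := by
  have h1 := h (p.1 - 1, p.2); have h2 := h p; have h3 := h (p.1 + 1, p.2)
  simp only [W1x]; linarith

lemma wb_ge (h : ∀ p, m ≤ ω p) (p) : m ≤ W1x (W1y ω) p :=
  W1x_ge (fun q => W1y_ge h q) p

lemma wb_commute (ω : Grid Nx Ny) (p : ZMod Nx × ZMod Ny) :
    W1x (W1y ω) p = (W1x ω (p.1, p.2 - 1) + 4 * W1x ω p + W1x ω (p.1, p.2 + 1)) / 6 := by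
  simp only [W1x, W1y]; ring

lemma fluxX_nonneg (h : ∀ p, 0 ≤ f p) (p) : 0 ≤ fluxX f p := by
  have h1 := h (p.1, p.2 - 1); have h2 := h p; have h3 := h (p.1, p.2 + 1)
  have h4 := h (p.1 + 1, p.2 - 1); have h5 := h (p.1 + 1, p.2); have h6 := h (p.1 + 1, p.2 + 1)
  simp only [fluxX, W1y]; linarith

lemma fluxX_nonpos (h : ∀ p, f p ≤ 0) (p) : fluxX f p ≤ 0 := by
  have h1 := h (p.1, p.2 - 1); have h2 := h p; have h3 := h (p.1, p.2 + 1)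
  have h4 := h (p.1 + 1, p.2 - 1); have h5 := h (p.1 + 1, p.2); have h6 := h (p.1 + 1, p.2 + 1)
  simp only [fluxX, W1y]; linarith

lemma fluxX_mul_le (h : ∀ q, lam * f q ≤ c) (hc : 0 ≤ c) (p) : lam * fluxX f p ≤ c := by
  have h1 := h (p.1, p.2 - 1); have h2 := h p; have h3 := h (p.1, p.2 + 1)
  have h4 := h (p.1 + 1, p.2 - 1); have h5 := h (p.1 + 1, p.2); have h6 := h (p.1 + 1, p.2 + 1)
  simp only [fluxX, W1y]; linarith

lemma fluxX_mul_le' (h : ∀ q, lam * (-f q) ≤ c) (hc : 0 ≤ c) (p) : lam * (-fluxX f p) ≤ c := by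
  have h1 := h (p.1, p.2 - 1); have h2 := h p; have h3 := h (p.1, p.2 + 1)
  have h4 := h (p.1 + 1, p.2 - 1); have h5 := h (p.1 + 1, p.2); have h6 := h (p.1 + 1, p.2 + 1)
  simp only [fluxX, W1y]; linarith

lemma fluxY_nonneg (h : ∀ p, 0 ≤ f p) (p) : 0 ≤ fluxY f p := by
  have h1 := h (p.1 - 1, p.2); have h2 := h p; have h3 := h (p.1 + 1, p.2)
  have h4 := h (p.1 - 1, p.2 + 1); have h5 := h (p.1, p.2 + 1); have h6 := h (p.1 + 1, p.2 + 1)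
  simp only [fluxY, W1x]; linarith

lemma fluxY_nonpos (h : ∀ p, f p ≤ 0) (p) : fluxY f p ≤ 0 := by
  have h1 := h (p.1 - 1, p.2); have h2 := h p; have h3 := h (p.1 + 1, p.2)
  have h4 := h (p.1 - 1, p.2 + 1); have h5 := h (p.1, p.2 + 1); have h6 := h (p.1 + 1, p.2 + 1)
  simp only [fluxY, W1x]; linarith

lemma fluxY_mul_le (h : ∀ q, lam * f q ≤ c) (hc : 0 ≤ c) (p) : lam * fluxY f p ≤ c := by
  have h1 := h (p.1 - 1, p.2); have h2 := h p; have h3 := h (p.1 + 1, p.2)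
  have h4 := h (p.1 - 1, p.2 + 1); have h5 := h (p.1, p.2 + 1); have h6 := h (p.1 + 1, p.2 + 1)
  simp only [fluxY, W1x]; linarith

lemma fluxY_mul_le' (h : ∀ q, lam * (-f q) ≤ c) (hc : 0 ≤ c) (p) : lam * (-fluxY f p) ≤ c := by
  have h1 := h (p.1 - 1, p.2); have h2 := h p; have h3 := h (p.1 + 1, p.2)
  have h4 := h (p.1 - 1, p.2 + 1); have h5 := h (p.1, p.2 + 1); have h6 := h (p.1 + 1, p.2 + 1)
  simp only [fluxY, W1x]; linarith

lemma fluxX_prod_bound (hlam : 0 ≤ lam) (hm : ∀ q, m ≤ ω q)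
    (hf24 : ∀ q, lam * f q ≤ 1/24) (p) :
    lam * (fluxX (had f ω) p - m * fluxX f p)
      ≤ 1/48 * ((W1y ω p - m) + (W1y ω (p.1 + 1, p.2) - m)) := by
  have key : ∀ q : ZMod Nx × ZMod Ny, lam * f q * (ω q - m) ≤ 1/24 * (ω q - m) := fun q =>
    mul_le_mul_of_nonneg_right (hf24 q) (by linarith [hm q])
  have h1 := key (p.1, p.2 - 1); have h2 := key p; have h3 := key (p.1, p.2 + 1)
  have h4 := key (p.1 + 1, p.2 - 1); have h5 := key (p.1 + 1, p.2); have h6 := key (p.1 + 1, p.2 + 1)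
  simp only [fluxX, W1y, had]; ring_nf
  ring_nf at h1 h2 h3 h4 h5 h6
  linarith

lemma fluxX_prod_nonneg (hm : ∀ q, m ≤ ω q) (hf : ∀ q, 0 ≤ f q) (p) :
    0 ≤ fluxX (had f ω) p - m * fluxX f p := by
  have key : ∀ q : ZMod Nx × ZMod Ny, 0 ≤ f q * (ω q - m) := fun q =>
    mul_nonneg (hf q) (by linarith [hm q])
  have h1 := key (p.1, p.2 - 1); have h2 := key p; have h3 := key (p.1, p.2 + 1)
  have h4 := key (p.1 + 1, p.2 - 1); have h5 := key (p.1 + 1, p.2); have h6 := key (p.1 + 1, p.2 + 1)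
  simp only [fluxX, W1y, had]; ring_nf
  ring_nf at h1 h2 h3 h4 h5 h6
  linarith

lemma fluxX_prod_nonpos (hm : ∀ q, m ≤ ω q) (hf : ∀ q, f q ≤ 0) (p) :
    fluxX (had f ω) p - m * fluxX f p ≤ 0 := by
  have key : ∀ q : ZMod Nx × ZMod Ny, f q * (ω q - m) ≤ 0 := fun q =>
    mul_nonpos_of_nonpos_of_nonneg (hf q) (by linarith [hm q])
  have h1 := key (p.1, p.2 - 1); have h2 := key p; have h3 := key (p.1, p.2 + 1)
  have h4 := key (p.1 + 1, p.2 - 1); have h5 := key (p.1 + 1, p.2); have h6 := key (p.1 + 1, p.2 + 1)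
  simp only [fluxX, W1y, had]; ring_nf
  ring_nf at h1 h2 h3 h4 h5 h6
  linarith

lemma fluxX_prod_bound' (hlam : 0 ≤ lam) (hm : ∀ q, m ≤ ω q)
    (hf24 : ∀ q, lam * (-f q) ≤ 1/24) (p) :
    lam * (m * fluxX f p - fluxX (had f ω) p)
      ≤ 1/48 * ((W1y ω p - m) + (W1y ω (p.1 + 1, p.2) - m)) := by
  have key : ∀ q : ZMod Nx × ZMod Ny, lam * (-f q) * (ω q - m) ≤ 1/24 * (ω q - m) := fun q =>
    mul_le_mul_of_nonneg_right (hf24 q) (by linarith [hm q])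
  have h1 := key (p.1, p.2 - 1); have h2 := key p; have h3 := key (p.1, p.2 + 1)
  have h4 := key (p.1 + 1, p.2 - 1); have h5 := key (p.1 + 1, p.2); have h6 := key (p.1 + 1, p.2 + 1)
  simp only [fluxX, W1y, had]; ring_nf
  ring_nf at h1 h2 h3 h4 h5 h6
  linarith

lemma fluxY_prod_bound (hlam : 0 ≤ lam) (hm : ∀ q, m ≤ ω q)
    (hf24 : ∀ q, lam * f q ≤ 1/24) (p) :
    lam * (fluxY (had f ω) p - m * fluxY f p)
      ≤ 1/48 * ((W1x ω p - m) + (W1x ω (p.1, p.2 + 1) - m)) := by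
  have key : ∀ q : ZMod Nx × ZMod Ny, lam * f q * (ω q - m) ≤ 1/24 * (ω q - m) := fun q =>
    mul_le_mul_of_nonneg_right (hf24 q) (by linarith [hm q])
  have h1 := key (p.1 - 1, p.2); have h2 := key p; have h3 := key (p.1 + 1, p.2)
  have h4 := key (p.1 - 1, p.2 + 1); have h5 := key (p.1, p.2 + 1); have h6 := key (p.1 + 1, p.2 + 1)
  simp only [fluxY, W1x, had]; ring_nf
  ring_nf at h1 h2 h3 h4 h5 h6
  linarith

lemma fluxY_prod_nonneg (hm : ∀ q, m ≤ ω q) (hf : ∀ q, 0 ≤ f q) (p) :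
    0 ≤ fluxY (had f ω) p - m * fluxY f p := by
  have key : ∀ q : ZMod Nx × ZMod Ny, 0 ≤ f q * (ω q - m) := fun q =>
    mul_nonneg (hf q) (by linarith [hm q])
  have h1 := key (p.1 - 1, p.2); have h2 := key p; have h3 := key (p.1 + 1, p.2)
  have h4 := key (p.1 - 1, p.2 + 1); have h5 := key (p.1, p.2 + 1); have h6 := key (p.1 + 1, p.2 + 1)
  simp only [fluxY, W1x, had]; ring_nf
  ring_nf at h1 h2 h3 h4 h5 h6
  linarith

lemma fluxY_prod_nonpos (hm : ∀ q, m ≤ ω q) (hf : ∀ q, f q ≤ 0) (p) :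
    fluxY (had f ω) p - m * fluxY f p ≤ 0 := by
  have key : ∀ q : ZMod Nx × ZMod Ny, f q * (ω q - m) ≤ 0 := fun q =>
    mul_nonpos_of_nonpos_of_nonneg (hf q) (by linarith [hm q])
  have h1 := key (p.1 - 1, p.2); have h2 := key p; have h3 := key (p.1 + 1, p.2)
  have h4 := key (p.1 - 1, p.2 + 1); have h5 := key (p.1, p.2 + 1); have h6 := key (p.1 + 1, p.2 + 1)
  simp only [fluxY, W1x, had]; ring_nf
  ring_nf at h1 h2 h3 h4 h5 h6
  linarith

lemma fluxY_prod_bound' (hlam : 0 ≤ lam) (hm : ∀ q, m ≤ ω q)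
    (hf24 : ∀ q, lam * (-f q) ≤ 1/24) (p) :
    lam * (m * fluxY f p - fluxY (had f ω) p)
      ≤ 1/48 * ((W1x ω p - m) + (W1x ω (p.1, p.2 + 1) - m)) := by
  have key : ∀ q : ZMod Nx × ZMod Ny, lam * (-f q) * (ω q - m) ≤ 1/24 * (ω q - m) := fun q =>
    mul_le_mul_of_nonneg_right (hf24 q) (by linarith [hm q])
  have h1 := key (p.1 - 1, p.2); have h2 := key p; have h3 := key (p.1 + 1, p.2)
  have h4 := key (p.1 - 1, p.2 + 1); have h5 := key (p.1, p.2 + 1); have h6 := key (p.1 + 1, p.2 + 1)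
  simp only [fluxY, W1x, had]; ring_nf
  ring_nf at h1 h2 h3 h4 h5 h6
  linarith

/-! ### Negation lemmas -/

lemma W1y_negf (f : Grid Nx Ny) : W1y (fun q => -f q) = fun p => -W1y f p := by
  funext p; simp only [W1y]; ring

lemma W1x_negf (f : Grid Nx Ny) : W1x (fun q => -f q) = fun p => -W1x f p := by
  funext p; simp only [W1x]; ring

lemma wb_negf (f : Grid Nx Ny) : W1x (W1y (fun q => -f q)) = fun p => -W1x (W1y f) p := by
  funext p; simp only [W1x, W1y]; ring

lemma had_negf (f g : Grid Nx Ny) : had f (fun q => -g q) = fun q => -had f g q := by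
  funext q; simp only [had]; ring

lemma fluxX_negf (f : Grid Nx Ny) : fluxX (fun q => -f q) = fun p => -fluxX f p := by
  funext p; simp only [fluxX, W1y]; ring

lemma fluxY_negf (f : Grid Nx Ny) : fluxY (fun q => -f q) = fun p => -fluxY f p := by
  funext p; simp only [fluxY, W1x]; ring

lemma body_neg (τ p1 p2 m1 m2 w0 w1 w2 w3 G Gm : ℝ) :
    p1 * -w1 + mminmod3 τ (-G - p1 * -w1) (p1 * (-w2 - -w1)) (p2 * (-w1 - -w0))
      + m1 * -w2 - mminmod3 τ (m1 * -w2 - -Gm) (m1 * (-w2 - -w1)) (m2 * (-w3 - -w2))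
    = -(p1 * w1 + mminmod3 τ (G - p1 * w1) (p1 * (w2 - w1)) (p2 * (w1 - w0))
      + m1 * w2 - mminmod3 τ (m1 * w2 - Gm) (m1 * (w2 - w1)) (m2 * (w3 - w2))) := by
  rw [show -G - p1 * -w1 = -(G - p1 * w1) by ring,
      show p1 * (-w2 - -w1) = -(p1 * (w2 - w1)) by ring,
      show p2 * (-w1 - -w0) = -(p2 * (w1 - w0)) by ring,
      show m1 * -w2 - -Gm = -(m1 * w2 - Gm) by ring,
      show m1 * (-w2 - -w1) = -(m1 * (w2 - w1)) by ring,
      show m2 * (-w3 - -w2) = -(m2 * (w3 - w2)) by ring,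
      mminmod3_neg, mminmod3_neg]
  ring

lemma limitedFluxX_neg (τ : ℝ) (up um ω : Grid Nx Ny) (q : ZMod Nx × ZMod Ny) :
    limitedFluxX τ up um (fun r => -ω r) q = -limitedFluxX τ up um ω q := by
  simp only [limitedFluxX, wb_negf, had_negf, fluxX_negf]
  exact body_neg τ _ _ _ _ _ _ _ _ _ _

lemma limitedFluxY_neg (τ : ℝ) (vp vm ω : Grid Nx Ny) (q : ZMod Nx × ZMod Ny) :
    limitedFluxY τ vp vm (fun r => -ω r) q = -limitedFluxY τ vp vm ω q := by
  simp only [limitedFluxY, wb_negf, had_negf, fluxY_negf]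
  exact body_neg τ _ _ _ _ _ _ _ _ _ _

end Aux

section Main

lemma tvb_lower_bound {Nx Ny : ℕ} [NeZero Nx] [NeZero Ny]
    (lam1 lam2 : ℝ) (hlam1 : 0 ≤ lam1) (hlam2 : 0 ≤ lam2)
    (m τ : ℝ)
    (up um vp vm ω : Grid Nx Ny)
    (hup : ∀ p, 0 ≤ up p) (hum : ∀ p, um p ≤ 0)
    (hvp : ∀ p, 0 ≤ vp p) (hvm : ∀ p, vm p ≤ 0)
    (hω : ∀ p, m ≤ ω p)
    (hCFL1 : lam1 * gridSup (fun p => max (up p) (-um p)) ≤ 1 / 24)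
    (hCFL2 : lam2 * gridSup (fun p => max (vp p) (-vm p)) ≤ 1 / 24)
    (hdivfree : ∀ p, lam1 * Dx (W1y (fun q => up q + um q)) p
      + lam2 * Dy (W1x (fun q => vp q + vm q)) p = 0) :
    ∀ p : ZMod Nx × ZMod Ny,
      m ≤ W1x (W1y ω) p
          - lam1 * (limitedFluxX τ up um ω p - limitedFluxX τ up um ω (p.1 - 1, p.2))
          - lam2 * (limitedFluxY τ vp vm ω p - limitedFluxY τ vp vm ω (p.1, p.2 - 1)) := by
  intro p
  -- pointwise CFL bounds
  have hsup1 : ∀ q : ZMod Nx × ZMod Ny, max (up q) (-um q)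
      ≤ gridSup (fun p => max (up p) (-um p)) := by
    intro q; unfold gridSup
    exact Finset.le_sup' (fun p => max (up p) (-um p)) (Finset.mem_univ q)
  have hsup2 : ∀ q : ZMod Nx × ZMod Ny, max (vp q) (-vm q)
      ≤ gridSup (fun p => max (vp p) (-vm p)) := by
    intro q; unfold gridSup
    exact Finset.le_sup' (fun p => max (vp p) (-vm p)) (Finset.mem_univ q)
  have hup24 : ∀ q, lam1 * up q ≤ 1/24 := by
    intro q
    have h := le_trans (le_max_left (up q) (-um q)) (hsup1 q)
    linarith [mul_le_mul_of_nonneg_left h hlam1]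
  have hum24 : ∀ q, lam1 * (-um q) ≤ 1/24 := by
    intro q
    have h := le_trans (le_max_right (up q) (-um q)) (hsup1 q)
    linarith [mul_le_mul_of_nonneg_left h hlam1]
  have hvp24 : ∀ q, lam2 * vp q ≤ 1/24 := by
    intro q
    have h := le_trans (le_max_left (vp q) (-vm q)) (hsup2 q)
    linarith [mul_le_mul_of_nonneg_left h hlam2]
  have hvm24 : ∀ q, lam2 * (-vm q) ≤ 1/24 := by
    intro q
    have h := le_trans (le_max_right (vp q) (-vm q)) (hsup2 q)
    linarith [mul_le_mul_of_nonneg_left h hlam2]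
  have h24 : (0:ℝ) ≤ 1/24 := by norm_num
  have e1 : p.1 - 1 + 1 = p.1 := by ring
  have e2 : p.1 - 1 + 2 = p.1 + 1 := by ring
  have e1' : p.2 - 1 + 1 = p.2 := by ring
  have e2' : p.2 - 1 + 2 = p.2 + 1 := by ring
  -- x-direction core estimate
  have hgmm := fluxX_prod_bound' hlam1 hω hum24 (p.1 - 1, p.2)
  simp only [e1, Prod.mk.eta] at hgmm
  have hx := tvb_core lam1 m τ (fluxX up p) (fluxX up (p.1 - 1, p.2))
      (fluxX um p) (fluxX um (p.1 - 1, p.2))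
      (W1x (W1y ω) (p.1 - 1, p.2)) (W1x (W1y ω) p) (W1x (W1y ω) (p.1 + 1, p.2))
      (W1y ω (p.1 - 1, p.2)) (W1y ω p) (W1y ω (p.1 + 1, p.2))
      (fluxX (had up ω) p) (fluxX (had up ω) (p.1 - 1, p.2))
      (fluxX (had um ω) p) (fluxX (had um ω) (p.1 - 1, p.2))
      (fluxX up (p.1 - 1 - 1, p.2) * (W1x (W1y ω) (p.1 - 1, p.2) - W1x (W1y ω) (p.1 - 1 - 1, p.2)))
      (fluxX um (p.1 + 1, p.2) * (W1x (W1y ω) (p.1 + 2, p.2) - W1x (W1y ω) (p.1 + 1, p.2)))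
      hlam1 (fluxX_nonneg hup p) (fluxX_nonneg hup (p.1 - 1, p.2))
      (fluxX_nonpos hum p) (fluxX_nonpos hum (p.1 - 1, p.2))
      (fluxX_mul_le hup24 h24 (p.1 - 1, p.2)) (fluxX_mul_le' hum24 h24 p)
      (wb_ge hω (p.1 - 1, p.2)) (wb_ge hω (p.1 + 1, p.2))
      (W1y_ge hω (p.1 - 1, p.2)) (W1y_ge hω p) (W1y_ge hω (p.1 + 1, p.2))
      rfl
      (fluxX_prod_bound hlam1 hω hup24 p)
      (fluxX_prod_nonneg hω hup (p.1 - 1, p.2))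
      (fluxX_prod_nonpos hω hum p)
      hgmm
  -- y-direction core estimate
  have hgmm' := fluxY_prod_bound' hlam2 hω hvm24 (p.1, p.2 - 1)
  simp only [e1', Prod.mk.eta] at hgmm'
  have hy := tvb_core lam2 m τ (fluxY vp p) (fluxY vp (p.1, p.2 - 1))
      (fluxY vm p) (fluxY vm (p.1, p.2 - 1))
      (W1x (W1y ω) (p.1, p.2 - 1)) (W1x (W1y ω) p) (W1x (W1y ω) (p.1, p.2 + 1))
      (W1x ω (p.1, p.2 - 1)) (W1x ω p) (W1x ω (p.1, p.2 + 1))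
      (fluxY (had vp ω) p) (fluxY (had vp ω) (p.1, p.2 - 1))
      (fluxY (had vm ω) p) (fluxY (had vm ω) (p.1, p.2 - 1))
      (fluxY vp (p.1, p.2 - 1 - 1) * (W1x (W1y ω) (p.1, p.2 - 1) - W1x (W1y ω) (p.1, p.2 - 1 - 1)))
      (fluxY vm (p.1, p.2 + 1) * (W1x (W1y ω) (p.1, p.2 + 2) - W1x (W1y ω) (p.1, p.2 + 1)))
      hlam2 (fluxY_nonneg hvp p) (fluxY_nonneg hvp (p.1, p.2 - 1))
      (fluxY_nonpos hvm p) (fluxY_nonpos hvm (p.1, p.2 - 1))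
      (fluxY_mul_le hvp24 h24 (p.1, p.2 - 1)) (fluxY_mul_le' hvm24 h24 p)
      (wb_ge hω (p.1, p.2 - 1)) (wb_ge hω (p.1, p.2 + 1))
      (W1x_ge hω (p.1, p.2 - 1)) (W1x_ge hω p) (W1x_ge hω (p.1, p.2 + 1))
      (wb_commute ω p)
      (fluxY_prod_bound hlam2 hω hvp24 p)
      (fluxY_prod_nonneg hω hvp (p.1, p.2 - 1))
      (fluxY_prod_nonpos hω hvm p)
      hgmm'
  -- algebraic identity for the x-flux difference
  have hGx : lam1 * (limitedFluxX τ up um ω p - limitedFluxX τ up um ω (p.1 - 1, p.2))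
      = lam1 * (((fluxX up p + fluxX um p) - (fluxX up (p.1 - 1, p.2) + fluxX um (p.1 - 1, p.2)))
        * W1x (W1y ω) p)
      + lam1 * (fluxX um p * (W1x (W1y ω) (p.1 + 1, p.2) - W1x (W1y ω) p)
        + fluxX up (p.1 - 1, p.2) * (W1x (W1y ω) p - W1x (W1y ω) (p.1 - 1, p.2))
        + mminmod3 τ (fluxX (had up ω) p - fluxX up p * W1x (W1y ω) p)
            (fluxX up p * (W1x (W1y ω) (p.1 + 1, p.2) - W1x (W1y ω) p))
            (fluxX up (p.1 - 1, p.2) * (W1x (W1y ω) p - W1x (W1y ω) (p.1 - 1, p.2)))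
        - mminmod3 τ (fluxX (had up ω) (p.1 - 1, p.2)
              - fluxX up (p.1 - 1, p.2) * W1x (W1y ω) (p.1 - 1, p.2))
            (fluxX up (p.1 - 1, p.2) * (W1x (W1y ω) p - W1x (W1y ω) (p.1 - 1, p.2)))
            (fluxX up (p.1 - 1 - 1, p.2)
              * (W1x (W1y ω) (p.1 - 1, p.2) - W1x (W1y ω) (p.1 - 1 - 1, p.2)))
        - mminmod3 τ (fluxX um p * W1x (W1y ω) (p.1 + 1, p.2) - fluxX (had um ω) p)
            (fluxX um p * (W1x (W1y ω) (p.1 + 1, p.2) - W1x (W1y ω) p))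
            (fluxX um (p.1 + 1, p.2)
              * (W1x (W1y ω) (p.1 + 2, p.2) - W1x (W1y ω) (p.1 + 1, p.2)))
        + mminmod3 τ (fluxX um (p.1 - 1, p.2) * W1x (W1y ω) p - fluxX (had um ω) (p.1 - 1, p.2))
            (fluxX um (p.1 - 1, p.2) * (W1x (W1y ω) p - W1x (W1y ω) (p.1 - 1, p.2)))
            (fluxX um p * (W1x (W1y ω) (p.1 + 1, p.2) - W1x (W1y ω) p))) := by
    simp only [limitedFluxX, e1, e2, Prod.mk.eta]
    ring
  -- algebraic identity for the y-flux difference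
  have hGy : lam2 * (limitedFluxY τ vp vm ω p - limitedFluxY τ vp vm ω (p.1, p.2 - 1))
      = lam2 * (((fluxY vp p + fluxY vm p) - (fluxY vp (p.1, p.2 - 1) + fluxY vm (p.1, p.2 - 1)))
        * W1x (W1y ω) p)
      + lam2 * (fluxY vm p * (W1x (W1y ω) (p.1, p.2 + 1) - W1x (W1y ω) p)
        + fluxY vp (p.1, p.2 - 1) * (W1x (W1y ω) p - W1x (W1y ω) (p.1, p.2 - 1))
        + mminmod3 τ (fluxY (had vp ω) p - fluxY vp p * W1x (W1y ω) p)
            (fluxY vp p * (W1x (W1y ω) (p.1, p.2 + 1) - W1x (W1y ω) p))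
            (fluxY vp (p.1, p.2 - 1) * (W1x (W1y ω) p - W1x (W1y ω) (p.1, p.2 - 1)))
        - mminmod3 τ (fluxY (had vp ω) (p.1, p.2 - 1)
              - fluxY vp (p.1, p.2 - 1) * W1x (W1y ω) (p.1, p.2 - 1))
            (fluxY vp (p.1, p.2 - 1) * (W1x (W1y ω) p - W1x (W1y ω) (p.1, p.2 - 1)))
            (fluxY vp (p.1, p.2 - 1 - 1)
              * (W1x (W1y ω) (p.1, p.2 - 1) - W1x (W1y ω) (p.1, p.2 - 1 - 1)))
        - mminmod3 τ (fluxY vm p * W1x (W1y ω) (p.1, p.2 + 1) - fluxY (had vm ω) p)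
            (fluxY vm p * (W1x (W1y ω) (p.1, p.2 + 1) - W1x (W1y ω) p))
            (fluxY vm (p.1, p.2 + 1)
              * (W1x (W1y ω) (p.1, p.2 + 2) - W1x (W1y ω) (p.1, p.2 + 1)))
        + mminmod3 τ (fluxY vm (p.1, p.2 - 1) * W1x (W1y ω) p - fluxY (had vm ω) (p.1, p.2 - 1))
            (fluxY vm (p.1, p.2 - 1) * (W1x (W1y ω) p - W1x (W1y ω) (p.1, p.2 - 1)))
            (fluxY vm p * (W1x (W1y ω) (p.1, p.2 + 1) - W1x (W1y ω) p))) := by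
    simp only [limitedFluxY, e1', e2', Prod.mk.eta]
    ring
  -- divergence-free condition in flux form
  have hdiv : lam1 * ((fluxX up p + fluxX um p)
        - (fluxX up (p.1 - 1, p.2) + fluxX um (p.1 - 1, p.2)))
      + lam2 * ((fluxY vp p + fluxY vm p)
        - (fluxY vp (p.1, p.2 - 1) + fluxY vm (p.1, p.2 - 1))) = 0 := by
    have hd := hdivfree p
    simp only [Dx, Dy, W1x, W1y, fluxX, fluxY, e1, e1', Prod.mk.eta] at hd ⊢
    linear_combination hd
  have hdw : (lam1 * ((fluxX up p + fluxX um p)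
        - (fluxX up (p.1 - 1, p.2) + fluxX um (p.1 - 1, p.2)))
      + lam2 * ((fluxY vp p + fluxY vm p)
        - (fluxY vp (p.1, p.2 - 1) + fluxY vm (p.1, p.2 - 1)))) * W1x (W1y ω) p = 0 := by
    rw [hdiv, zero_mul]
  have hΩ : m ≤ W1x (W1y ω) p := wb_ge hω p
  linarith [hx, hy, hGx, hGy, hdw, hΩ]

end Main

/-- Bound preservation of the compact finite difference scheme with the
TVB-limited fluxes, under the CFL condition `λ1·max(u⁺,−u⁻) ≤ 1/24`,
`λ2·max(v⁺,−v⁻) ≤ 1/24` and the discrete divergence-free constraint. -/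
theorem tvb_bound_preserving {Nx Ny : ℕ} [NeZero Nx] [NeZero Ny]
    (hNx : 5 ≤ Nx) (hNy : 5 ≤ Ny)
    (lam1 lam2 : ℝ) (hlam1 : 0 ≤ lam1) (hlam2 : 0 ≤ lam2)
    (m M τ : ℝ) (hmM : m ≤ M) (hτ : 0 ≤ τ)
    (up um vp vm ω : Grid Nx Ny)
    (hup : ∀ p, 0 ≤ up p) (hum : ∀ p, um p ≤ 0)
    (hvp : ∀ p, 0 ≤ vp p) (hvm : ∀ p, vm p ≤ 0)
    (hω : ∀ p, m ≤ ω p ∧ ω p ≤ M)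
    (hCFL1 : lam1 * gridSup (fun p => max (up p) (-um p)) ≤ 1 / 24)
    (hCFL2 : lam2 * gridSup (fun p => max (vp p) (-vm p)) ≤ 1 / 24)
    (hdivfree : ∀ p, lam1 * Dx (W1y (fun q => up q + um q)) p
      + lam2 * Dy (W1x (fun q => vp q + vm q)) p = 0) :
    ∀ p : ZMod Nx × ZMod Ny,
      m ≤ W1x (W1y ω) p
          - lam1 * (limitedFluxX τ up um ω p - limitedFluxX τ up um ω (p.1 - 1, p.2))
          - lam2 * (limitedFluxY τ vp vm ω p - limitedFluxY τ vp vm ω (p.1, p.2 - 1)) ∧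
        W1x (W1y ω) p
          - lam1 * (limitedFluxX τ up um ω p - limitedFluxX τ up um ω (p.1 - 1, p.2))
          - lam2 * (limitedFluxY τ vp vm ω p - limitedFluxY τ vp vm ω (p.1, p.2 - 1)) ≤ M := by
  intro p
  constructor
  · exact tvb_lower_bound lam1 lam2 hlam1 hlam2 m τ up um vp vm ω hup hum hvp hvm
      (fun q => (hω q).1) hCFL1 hCFL2 hdivfree p
  · have h := tvb_lower_bound lam1 lam2 hlam1 hlam2 (-M) τ up um vp vm (fun q => -ω q)
      hup hum hvp hvm (fun q => neg_le_neg (hω q).2) hCFL1 hCFL2 hdivfree p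
    rw [limitedFluxX_neg, limitedFluxX_neg, limitedFluxY_neg, limitedFluxY_neg, wb_negf] at h
    simp only at h
    linarith
end
end

section
/- Let λ1, λ2 ≥ 0, reals m ≤ M, and grid functions ω, u⁺, u⁻, v⁺, v⁻ with u⁺_{i,j} ≥ 0, u⁻_{i,j} ≤ 0, v⁺_{i,j} ≥ 0, v⁻_{i,j} ≤ 0 and m ≤ ω_{i,j} ≤ M for all i,j. Set u = u⁺ + u⁻, v = v⁺ + v⁻, ω̄ = W_{1x}W_{1y}ω. Assume λ1·max_{i,j} max(u⁺_{i,j}, −u⁻_{i,j}) ≤ 1/24, λ2·max_{i,j} max(v⁺_{i,j}, −v⁻_{i,j}) ≤ 1/24, and λ1·(D_x W_{1y} u)_{i,j} + λ2·(D_y W_{1x} v)_{i,j} = 0 for all i,j. Suppose G⁺, G⁻ are numbers indexed by half-integer points (i+1/2, j) and H⁺, H⁻ are numbers indexed by (i, j+1/2) such that each G⁺_{i+1/2,j} lies between (u⁺ω)̂_{i+1/2,j} and û⁺_{i+1/2,j}·ω̄_{i,j} (inclusive), each G⁻_{i+1/2,j} lies between (u⁻ω)̂_{i+1/2,j} and û⁻_{i+1/2,j}·ω̄_{i+1,j},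 each H⁺_{i,j+1/2} lies between (v⁺ω)̂_{i,j+1/2} and v̂⁺_{i,j+1/2}·ω̄_{i,j}, and each H⁻_{i,j+1/2} lies between (v⁻ω)̂_{i,j+1/2} and v̂⁻_{i,j+1/2}·ω̄_{i,j+1}. Then, with G = G⁺ + G⁻ and H = H⁺ + H⁻, for all i,j: m ≤ ω̄_{i,j} − λ1(G_{i+1/2,j} − G_{i−1/2,j}) − λ2(H_{i,j+1/2} − H_{i,j−1/2}) ≤ M. -/
noncomputable section

variable {Nx Ny : ℕ}

set_option maxHeartbeats 2000000 in
theorem aux_lower {Nx Ny : ℕ} [NeZero Nx] [NeZero Ny]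
    (lam1 lam2 : ℝ) (hlam1 : 0 ≤ lam1) (hlam2 : 0 ≤ lam2)
    (m : ℝ)
    (up um vp vm ω : Grid Nx Ny)
    (hup : ∀ p, 0 ≤ up p) (hum : ∀ p, um p ≤ 0)
    (hvp : ∀ p, 0 ≤ vp p) (hvm : ∀ p, vm p ≤ 0)
    (hω : ∀ p, m ≤ ω p)
    (hCFL1 : lam1 * gridSup (fun p => max (up p) (-um p)) ≤ 1 / 24)
    (hCFL2 : lam2 * gridSup (fun p => max (vp p) (-vm p)) ≤ 1 / 24)
    (hdivfree : ∀ p, lam1 * Dx (W1y (fun q => up q + um q)) p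
      + lam2 * Dy (W1x (fun q => vp q + vm q)) p = 0)
    (Gp Gm Hp Hm : Grid Nx Ny)
    (hGp : ∀ p, min (fluxX (had up ω) p) (fluxX up p * W1x (W1y ω) p) ≤ Gp p ∧
      Gp p ≤ max (fluxX (had up ω) p) (fluxX up p * W1x (W1y ω) p))
    (hGm : ∀ p, min (fluxX (had um ω) p) (fluxX um p * W1x (W1y ω) (p.1 + 1, p.2)) ≤ Gm p ∧
      Gm p ≤ max (fluxX (had um ω) p) (fluxX um p * W1x (W1y ω) (p.1 + 1, p.2)))
    (hHp : ∀ p, min (fluxY (had vp ω) p) (fluxY vp p * W1x (W1y ω) p) ≤ Hp p ∧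
      Hp p ≤ max (fluxY (had vp ω) p) (fluxY vp p * W1x (W1y ω) p))
    (hHm : ∀ p, min (fluxY (had vm ω) p) (fluxY vm p * W1x (W1y ω) (p.1, p.2 + 1)) ≤ Hm p ∧
      Hm p ≤ max (fluxY (had vm ω) p) (fluxY vm p * W1x (W1y ω) (p.1, p.2 + 1))) :
    ∀ p : ZMod Nx × ZMod Ny,
      m ≤ W1x (W1y ω) p
          - lam1 * ((Gp p + Gm p) - (Gp (p.1 - 1, p.2) + Gm (p.1 - 1, p.2)))
          - lam2 * ((Hp p + Hm p) - (Hp (p.1, p.2 - 1) + Hm (p.1, p.2 - 1))) := by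
  intro p
  have e1 : p.1 - 1 + 1 = p.1 := by ring
  have e2 : p.2 - 1 + 1 = p.2 := by ring
  -- pointwise CFL bounds
  have hu1 : ∀ q, lam1 * up q ≤ 1/24 := by
    intro q
    have h1 : up q ≤ gridSup (fun p => max (up p) (-um p)) :=
      le_trans (le_max_left _ _) (Finset.le_sup' (fun p => max (up p) (-um p)) (Finset.mem_univ q))
    have := mul_le_mul_of_nonneg_left h1 hlam1
    linarith
  have hu2 : ∀ q, lam1 * (-um q) ≤ 1/24 := by
    intro q
    have h1 : -um q ≤ gridSup (fun p => max (up p) (-um p)) :=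
      le_trans (le_max_right _ _) (Finset.le_sup' (fun p => max (up p) (-um p)) (Finset.mem_univ q))
    have := mul_le_mul_of_nonneg_left h1 hlam1
    linarith
  have hv1 : ∀ q, lam2 * vp q ≤ 1/24 := by
    intro q
    have h1 : vp q ≤ gridSup (fun p => max (vp p) (-vm p)) :=
      le_trans (le_max_left _ _) (Finset.le_sup' (fun p => max (vp p) (-vm p)) (Finset.mem_univ q))
    have := mul_le_mul_of_nonneg_left h1 hlam2
    linarith
  have hv2 : ∀ q, lam2 * (-vm q) ≤ 1/24 := by
    intro q
    have h1 : -vm q ≤ gridSup (fun p => max (vp p) (-vm p)) :=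
      le_trans (le_max_right _ _) (Finset.le_sup' (fun p => max (vp p) (-vm p)) (Finset.mem_univ q))
    have := mul_le_mul_of_nonneg_left h1 hlam2
    linarith
  -- W-level sign facts
  have hWyup : ∀ q : ZMod Nx × ZMod Ny, 0 ≤ W1y up q := by
    intro q; simp only [W1y]; linarith [hup (q.1, q.2 - 1), hup q, hup (q.1, q.2 + 1)]
  have hWyum : ∀ q : ZMod Nx × ZMod Ny, W1y um q ≤ 0 := by
    intro q; simp only [W1y]; linarith [hum (q.1, q.2 - 1), hum q, hum (q.1, q.2 + 1)]
  have hWxvp : ∀ q : ZMod Nx × ZMod Ny, 0 ≤ W1x vp q := by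
    intro q; simp only [W1x]; linarith [hvp (q.1 - 1, q.2), hvp q, hvp (q.1 + 1, q.2)]
  have hWxvm : ∀ q : ZMod Nx × ZMod Ny, W1x vm q ≤ 0 := by
    intro q; simp only [W1x]; linarith [hvm (q.1 - 1, q.2), hvm q, hvm (q.1 + 1, q.2)]
  have hWyω : ∀ q : ZMod Nx × ZMod Ny, m ≤ W1y ω q := by
    intro q; simp only [W1y]; linarith [hω (q.1, q.2 - 1), hω q, hω (q.1, q.2 + 1)]
  have hWxω : ∀ q : ZMod Nx × ZMod Ny, m ≤ W1x ω q := by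
    intro q; simp only [W1x]; linarith [hω (q.1 - 1, q.2), hω q, hω (q.1 + 1, q.2)]
  have hbar : ∀ q : ZMod Nx × ZMod Ny, m ≤ W1x (W1y ω) q := by
    intro q; simp only [W1x]; linarith [hWyω (q.1 - 1, q.2), hWyω q, hWyω (q.1 + 1, q.2)]
  -- CFL bounds at W and flux level
  have hu1W : ∀ q : ZMod Nx × ZMod Ny, lam1 * W1y up q ≤ 1/24 := by
    intro q; simp only [W1y]; linarith [hu1 (q.1, q.2 - 1), hu1 q, hu1 (q.1, q.2 + 1)]
  have hu2W : ∀ q : ZMod Nx × ZMod Ny, -(1/24) ≤ lam1 * W1y um q := by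
    intro q; simp only [W1y]; linarith [hu2 (q.1, q.2 - 1), hu2 q, hu2 (q.1, q.2 + 1)]
  have hv1W : ∀ q : ZMod Nx × ZMod Ny, lam2 * W1x vp q ≤ 1/24 := by
    intro q; simp only [W1x]; linarith [hv1 (q.1 - 1, q.2), hv1 q, hv1 (q.1 + 1, q.2)]
  have hv2W : ∀ q : ZMod Nx × ZMod Ny, -(1/24) ≤ lam2 * W1x vm q := by
    intro q; simp only [W1x]; linarith [hv2 (q.1 - 1, q.2), hv2 q, hv2 (q.1 + 1, q.2)]
  have hu1F : ∀ q : ZMod Nx × ZMod Ny, lam1 * fluxX up q ≤ 1/24 := by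
    intro q; simp only [fluxX]; linarith [hu1W q, hu1W (q.1 + 1, q.2)]
  have hu2F : ∀ q : ZMod Nx × ZMod Ny, -(1/24) ≤ lam1 * fluxX um q := by
    intro q; simp only [fluxX]; linarith [hu2W q, hu2W (q.1 + 1, q.2)]
  have hv1F : ∀ q : ZMod Nx × ZMod Ny, lam2 * fluxY vp q ≤ 1/24 := by
    intro q; simp only [fluxY]; linarith [hv1W q, hv1W (q.1, q.2 + 1)]
  have hv2F : ∀ q : ZMod Nx × ZMod Ny, -(1/24) ≤ lam2 * fluxY vm q := by
    intro q; simp only [fluxY]; linarith [hv2W q, hv2W (q.1, q.2 + 1)]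
  have hFup : ∀ q : ZMod Nx × ZMod Ny, 0 ≤ fluxX up q := by
    intro q; simp only [fluxX]; linarith [hWyup q, hWyup (q.1 + 1, q.2)]
  have hFum : ∀ q : ZMod Nx × ZMod Ny, fluxX um q ≤ 0 := by
    intro q; simp only [fluxX]; linarith [hWyum q, hWyum (q.1 + 1, q.2)]
  have hFvp : ∀ q : ZMod Nx × ZMod Ny, 0 ≤ fluxY vp q := by
    intro q; simp only [fluxY]; linarith [hWxvp q, hWxvp (q.1, q.2 + 1)]
  have hFvm : ∀ q : ZMod Nx × ZMod Ny, fluxY vm q ≤ 0 := by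
    intro q; simp only [fluxY]; linarith [hWxvm q, hWxvm (q.1, q.2 + 1)]
  -- product bounds at W level
  have hPup : ∀ q : ZMod Nx × ZMod Ny, W1y up q * m ≤ W1y (had up ω) q ∧
      lam1 * (W1y (had up ω) q - W1y up q * m) ≤ 1/24 * (W1y ω q - m) := by
    intro q
    have k1 := mul_le_mul_of_nonneg_right (hu1 (q.1, q.2 - 1)) (sub_nonneg.2 (hω (q.1, q.2 - 1)))
    have k2 := mul_le_mul_of_nonneg_right (hu1 q) (sub_nonneg.2 (hω q))
    have k3 := mul_le_mul_of_nonneg_right (hu1 (q.1, q.2 + 1)) (sub_nonneg.2 (hω (q.1, q.2 + 1)))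
    have n1 := mul_nonneg (hup (q.1, q.2 - 1)) (sub_nonneg.2 (hω (q.1, q.2 - 1)))
    have n2 := mul_nonneg (hup q) (sub_nonneg.2 (hω q))
    have n3 := mul_nonneg (hup (q.1, q.2 + 1)) (sub_nonneg.2 (hω (q.1, q.2 + 1)))
    simp only [W1y, had]
    constructor <;> linarith
  have hPum : ∀ q : ZMod Nx × ZMod Ny, W1y (had um ω) q ≤ W1y um q * m ∧
      lam1 * (W1y um q * m - W1y (had um ω) q) ≤ 1/24 * (W1y ω q - m) := by
    intro q
    have k1 := mul_le_mul_of_nonneg_right (hu2 (q.1, q.2 - 1)) (sub_nonneg.2 (hω (q.1, q.2 - 1)))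
    have k2 := mul_le_mul_of_nonneg_right (hu2 q) (sub_nonneg.2 (hω q))
    have k3 := mul_le_mul_of_nonneg_right (hu2 (q.1, q.2 + 1)) (sub_nonneg.2 (hω (q.1, q.2 + 1)))
    have n1 := mul_nonneg (neg_nonneg.2 (hum (q.1, q.2 - 1))) (sub_nonneg.2 (hω (q.1, q.2 - 1)))
    have n2 := mul_nonneg (neg_nonneg.2 (hum q)) (sub_nonneg.2 (hω q))
    have n3 := mul_nonneg (neg_nonneg.2 (hum (q.1, q.2 + 1))) (sub_nonneg.2 (hω (q.1, q.2 + 1)))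
    simp only [W1y, had]
    constructor <;> linarith
  have hPvp : ∀ q : ZMod Nx × ZMod Ny, W1x vp q * m ≤ W1x (had vp ω) q ∧
      lam2 * (W1x (had vp ω) q - W1x vp q * m) ≤ 1/24 * (W1x ω q - m) := by
    intro q
    have k1 := mul_le_mul_of_nonneg_right (hv1 (q.1 - 1, q.2)) (sub_nonneg.2 (hω (q.1 - 1, q.2)))
    have k2 := mul_le_mul_of_nonneg_right (hv1 q) (sub_nonneg.2 (hω q))
    have k3 := mul_le_mul_of_nonneg_right (hv1 (q.1 + 1, q.2)) (sub_nonneg.2 (hω (q.1 + 1, q.2)))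
    have n1 := mul_nonneg (hvp (q.1 - 1, q.2)) (sub_nonneg.2 (hω (q.1 - 1, q.2)))
    have n2 := mul_nonneg (hvp q) (sub_nonneg.2 (hω q))
    have n3 := mul_nonneg (hvp (q.1 + 1, q.2)) (sub_nonneg.2 (hω (q.1 + 1, q.2)))
    simp only [W1x, had]
    constructor <;> linarith
  have hPvm : ∀ q : ZMod Nx × ZMod Ny, W1x (had vm ω) q ≤ W1x vm q * m ∧
      lam2 * (W1x vm q * m - W1x (had vm ω) q) ≤ 1/24 * (W1x ω q - m) := by
    intro q
    have k1 := mul_le_mul_of_nonneg_right (hv2 (q.1 - 1, q.2)) (sub_nonneg.2 (hω (q.1 - 1, q.2)))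
    have k2 := mul_le_mul_of_nonneg_right (hv2 q) (sub_nonneg.2 (hω q))
    have k3 := mul_le_mul_of_nonneg_right (hv2 (q.1 + 1, q.2)) (sub_nonneg.2 (hω (q.1 + 1, q.2)))
    have n1 := mul_nonneg (neg_nonneg.2 (hvm (q.1 - 1, q.2))) (sub_nonneg.2 (hω (q.1 - 1, q.2)))
    have n2 := mul_nonneg (neg_nonneg.2 (hvm q)) (sub_nonneg.2 (hω q))
    have n3 := mul_nonneg (neg_nonneg.2 (hvm (q.1 + 1, q.2))) (sub_nonneg.2 (hω (q.1 + 1, q.2)))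
    simp only [W1x, had]
    constructor <;> linarith
  -- product bounds at flux level
  have hFPup : ∀ q : ZMod Nx × ZMod Ny, fluxX up q * m ≤ fluxX (had up ω) q ∧
      lam1 * (fluxX (had up ω) q - fluxX up q * m) ≤ 1/24 * (fluxX ω q - m) := by
    intro q
    have a := hPup q; have b := hPup (q.1 + 1, q.2)
    simp only [fluxX]
    constructor <;> linarith [a.1, a.2, b.1, b.2]
  have hFPum : ∀ q : ZMod Nx × ZMod Ny, fluxX (had um ω) q ≤ fluxX um q * m ∧
      lam1 * (fluxX um q * m - fluxX (had um ω) q) ≤ 1/24 * (fluxX ω q - m) := by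
    intro q
    have a := hPum q; have b := hPum (q.1 + 1, q.2)
    simp only [fluxX]
    constructor <;> linarith [a.1, a.2, b.1, b.2]
  have hFPvp : ∀ q : ZMod Nx × ZMod Ny, fluxY vp q * m ≤ fluxY (had vp ω) q ∧
      lam2 * (fluxY (had vp ω) q - fluxY vp q * m) ≤ 1/24 * (fluxY ω q - m) := by
    intro q
    have a := hPvp q; have b := hPvp (q.1, q.2 + 1)
    simp only [fluxY]
    constructor <;> linarith [a.1, a.2, b.1, b.2]
  have hFPvm : ∀ q : ZMod Nx × ZMod Ny, fluxY (had vm ω) q ≤ fluxY vm q * m ∧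
      lam2 * (fluxY vm q * m - fluxY (had vm ω) q) ≤ 1/24 * (fluxY ω q - m) := by
    intro q
    have a := hPvm q; have b := hPvm (q.1, q.2 + 1)
    simp only [fluxY]
    constructor <;> linarith [a.1, a.2, b.1, b.2]
  -- main flux bounds at p, x-direction
  have hA : lam1 * Gp p ≤ lam1 * (fluxX up p * W1x (W1y ω) p) + 1/24 * (fluxX ω p - m) := by
    have h := (hGp p).2
    have hF := hFPup p
    have haω : fluxX up p * m ≤ fluxX up p * W1x (W1y ω) p :=
      mul_le_mul_of_nonneg_left (hbar p) (hFup p)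
    have h2 : Gp p ≤ fluxX up p * W1x (W1y ω) p + (fluxX (had up ω) p - fluxX up p * m) :=
      le_trans h (max_le (by linarith [hF.1]) (by linarith [hF.1]))
    have h3 := mul_le_mul_of_nonneg_left h2 hlam1
    linarith [hF.2]
  have hB : lam1 * (fluxX up (p.1 - 1, p.2) * W1x (W1y ω) p) - lam1 * Gp (p.1 - 1, p.2)
      ≤ 1/24 * (W1x (W1y ω) p - m) := by
    have h := (hGp (p.1 - 1, p.2)).1
    have hF := hFPup (p.1 - 1, p.2)
    have haω : fluxX up (p.1 - 1, p.2) * m ≤ fluxX up (p.1 - 1, p.2) * W1x (W1y ω) (p.1 - 1, p.2) :=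
      mul_le_mul_of_nonneg_left (hbar (p.1 - 1, p.2)) (hFup (p.1 - 1, p.2))
    have h1 : fluxX up (p.1 - 1, p.2) * m ≤ Gp (p.1 - 1, p.2) :=
      le_trans (le_min hF.1 haω) h
    have h2 := mul_le_mul_of_nonneg_left h1 hlam1
    have h3 := mul_le_mul_of_nonneg_right (hu1F (p.1 - 1, p.2)) (sub_nonneg.2 (hbar p))
    linarith
  have hC : lam1 * Gm p ≤ lam1 * (fluxX um p * W1x (W1y ω) p) + 1/24 * (W1x (W1y ω) p - m) := by
    have h := (hGm p).2
    have hF := hFPum p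
    have h1 : fluxX um p * W1x (W1y ω) (p.1 + 1, p.2) ≤ fluxX um p * m :=
      mul_le_mul_of_nonpos_left (hbar (p.1 + 1, p.2)) (hFum p)
    have h2 : Gm p ≤ fluxX um p * m := le_trans h (max_le hF.1 h1)
    have h3 := mul_le_mul_of_nonneg_left h2 hlam1
    have h4 : lam1 * (-(fluxX um p)) ≤ 1/24 := by linarith [hu2F p]
    have h5 := mul_le_mul_of_nonneg_right h4 (sub_nonneg.2 (hbar p))
    linarith
  have hD : lam1 * (fluxX um (p.1 - 1, p.2) * W1x (W1y ω) p) - lam1 * Gm (p.1 - 1, p.2)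
      ≤ 1/24 * (fluxX ω (p.1 - 1, p.2) - m) := by
    have h := (hGm (p.1 - 1, p.2)).1
    simp only [e1, Prod.mk.eta] at h
    have hF := hFPum (p.1 - 1, p.2)
    have h1 : fluxX um (p.1 - 1, p.2) * W1x (W1y ω) p ≤ fluxX um (p.1 - 1, p.2) * m :=
      mul_le_mul_of_nonpos_left (hbar p) (hFum (p.1 - 1, p.2))
    have h2 : fluxX (had um ω) (p.1 - 1, p.2) - fluxX um (p.1 - 1, p.2) * m
        + fluxX um (p.1 - 1, p.2) * W1x (W1y ω) p ≤ Gm (p.1 - 1, p.2) :=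
      le_trans (le_min (by linarith [hF.1]) (by linarith [hF.1])) h
    have h3 := mul_le_mul_of_nonneg_left h2 hlam1
    linarith [hF.2]
  -- main flux bounds at p, y-direction
  have hA' : lam2 * Hp p ≤ lam2 * (fluxY vp p * W1x (W1y ω) p) + 1/24 * (fluxY ω p - m) := by
    have h := (hHp p).2
    have hF := hFPvp p
    have haω : fluxY vp p * m ≤ fluxY vp p * W1x (W1y ω) p :=
      mul_le_mul_of_nonneg_left (hbar p) (hFvp p)
    have h2 : Hp p ≤ fluxY vp p * W1x (W1y ω) p + (fluxY (had vp ω) p - fluxY vp p * m) :=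
      le_trans h (max_le (by linarith [hF.1]) (by linarith [hF.1]))
    have h3 := mul_le_mul_of_nonneg_left h2 hlam2
    linarith [hF.2]
  have hB' : lam2 * (fluxY vp (p.1, p.2 - 1) * W1x (W1y ω) p) - lam2 * Hp (p.1, p.2 - 1)
      ≤ 1/24 * (W1x (W1y ω) p - m) := by
    have h := (hHp (p.1, p.2 - 1)).1
    have hF := hFPvp (p.1, p.2 - 1)
    have haω : fluxY vp (p.1, p.2 - 1) * m ≤ fluxY vp (p.1, p.2 - 1) * W1x (W1y ω) (p.1, p.2 - 1) :=
      mul_le_mul_of_nonneg_left (hbar (p.1, p.2 - 1)) (hFvp (p.1, p.2 - 1))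
    have h1 : fluxY vp (p.1, p.2 - 1) * m ≤ Hp (p.1, p.2 - 1) :=
      le_trans (le_min hF.1 haω) h
    have h2 := mul_le_mul_of_nonneg_left h1 hlam2
    have h3 := mul_le_mul_of_nonneg_right (hv1F (p.1, p.2 - 1)) (sub_nonneg.2 (hbar p))
    linarith
  have hC' : lam2 * Hm p ≤ lam2 * (fluxY vm p * W1x (W1y ω) p) + 1/24 * (W1x (W1y ω) p - m) := by
    have h := (hHm p).2
    have hF := hFPvm p
    have h1 : fluxY vm p * W1x (W1y ω) (p.1, p.2 + 1) ≤ fluxY vm p * m :=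
      mul_le_mul_of_nonpos_left (hbar (p.1, p.2 + 1)) (hFvm p)
    have h2 : Hm p ≤ fluxY vm p * m := le_trans h (max_le hF.1 h1)
    have h3 := mul_le_mul_of_nonneg_left h2 hlam2
    have h4 : lam2 * (-(fluxY vm p)) ≤ 1/24 := by linarith [hv2F p]
    have h5 := mul_le_mul_of_nonneg_right h4 (sub_nonneg.2 (hbar p))
    linarith
  have hD' : lam2 * (fluxY vm (p.1, p.2 - 1) * W1x (W1y ω) p) - lam2 * Hm (p.1, p.2 - 1)
      ≤ 1/24 * (fluxY ω (p.1, p.2 - 1) - m) := by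
    have h := (hHm (p.1, p.2 - 1)).1
    simp only [e2, Prod.mk.eta] at h
    have hF := hFPvm (p.1, p.2 - 1)
    have h1 : fluxY vm (p.1, p.2 - 1) * W1x (W1y ω) p ≤ fluxY vm (p.1, p.2 - 1) * m :=
      mul_le_mul_of_nonpos_left (hbar p) (hFvm (p.1, p.2 - 1))
    have h2 : fluxY (had vm ω) (p.1, p.2 - 1) - fluxY vm (p.1, p.2 - 1) * m
        + fluxY vm (p.1, p.2 - 1) * W1x (W1y ω) p ≤ Hm (p.1, p.2 - 1) :=
      le_trans (le_min (by linarith [hF.1]) (by linarith [hF.1])) h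
    have h3 := mul_le_mul_of_nonneg_left h2 hlam2
    linarith [hF.2]
  -- divergence-free condition at flux level
  have hdiv2 : ∀ W : ℝ,
      lam1 * (fluxX up p * W) + lam1 * (fluxX um p * W)
        - lam1 * (fluxX up (p.1 - 1, p.2) * W) - lam1 * (fluxX um (p.1 - 1, p.2) * W)
        + lam2 * (fluxY vp p * W) + lam2 * (fluxY vm p * W)
        - lam2 * (fluxY vp (p.1, p.2 - 1) * W) - lam2 * (fluxY vm (p.1, p.2 - 1) * W) = 0 := by
    intro W
    have h := hdivfree p
    simp only [Dx, Dy, W1x, W1y] at h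
    simp only [fluxX, fluxY, W1x, W1y, e1, e2, Prod.mk.eta]
    linear_combination W * h
  -- budget inequalities
  have hX : fluxX ω p - m + (fluxX ω (p.1 - 1, p.2) - m) ≤ 10 * (W1x (W1y ω) p - m) := by
    simp only [fluxX, W1x, e1, Prod.mk.eta]
    linarith [hWyω (p.1 - 1, p.2), hWyω p, hWyω (p.1 + 1, p.2)]
  have hcomm : W1x (W1y ω) p = W1y (W1x ω) p := by
    simp only [W1x, W1y]; ring
  have hY : fluxY ω p - m + (fluxY ω (p.1, p.2 - 1) - m) ≤ 10 * (W1x (W1y ω) p - m) := by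
    rw [hcomm]
    simp only [fluxY, W1y, e2, Prod.mk.eta]
    linarith [hWxω (p.1, p.2 - 1), hWxω p, hWxω (p.1, p.2 + 1)]
  have hfinal := hdiv2 (W1x (W1y ω) p)
  linarith [hA, hB, hC, hD, hA', hB', hC', hD', hX, hY, hfinal]

set_option maxHeartbeats 1000000 in
/-- Bound preservation of the compact finite difference scheme for any limited
fluxes `G = G⁺ + G⁻`, `H = H⁺ + H⁻` in which each one-sided limited flux lies
between the high-order flux and the corresponding first-order upwind flux. -/
theorem bound_preserving_of_flux_between {Nx Ny : ℕ} [NeZero Nx] [NeZero Ny]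
    (hNx : 5 ≤ Nx) (hNy : 5 ≤ Ny)
    (lam1 lam2 : ℝ) (hlam1 : 0 ≤ lam1) (hlam2 : 0 ≤ lam2)
    (m M : ℝ) (hmM : m ≤ M)
    (up um vp vm ω : Grid Nx Ny)
    (hup : ∀ p, 0 ≤ up p) (hum : ∀ p, um p ≤ 0)
    (hvp : ∀ p, 0 ≤ vp p) (hvm : ∀ p, vm p ≤ 0)
    (hω : ∀ p, m ≤ ω p ∧ ω p ≤ M)
    (hCFL1 : lam1 * gridSup (fun p => max (up p) (-um p)) ≤ 1 / 24)
    (hCFL2 : lam2 * gridSup (fun p => max (vp p) (-vm p)) ≤ 1 / 24)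
    (hdivfree : ∀ p, lam1 * Dx (W1y (fun q => up q + um q)) p
      + lam2 * Dy (W1x (fun q => vp q + vm q)) p = 0)
    (Gp Gm Hp Hm : Grid Nx Ny)
    (hGp : ∀ p, min (fluxX (had up ω) p) (fluxX up p * W1x (W1y ω) p) ≤ Gp p ∧
      Gp p ≤ max (fluxX (had up ω) p) (fluxX up p * W1x (W1y ω) p))
    (hGm : ∀ p, min (fluxX (had um ω) p) (fluxX um p * W1x (W1y ω) (p.1 + 1, p.2)) ≤ Gm p ∧
      Gm p ≤ max (fluxX (had um ω) p) (fluxX um p * W1x (W1y ω) (p.1 + 1, p.2)))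
    (hHp : ∀ p, min (fluxY (had vp ω) p) (fluxY vp p * W1x (W1y ω) p) ≤ Hp p ∧
      Hp p ≤ max (fluxY (had vp ω) p) (fluxY vp p * W1x (W1y ω) p))
    (hHm : ∀ p, min (fluxY (had vm ω) p) (fluxY vm p * W1x (W1y ω) (p.1, p.2 + 1)) ≤ Hm p ∧
      Hm p ≤ max (fluxY (had vm ω) p) (fluxY vm p * W1x (W1y ω) (p.1, p.2 + 1))) :
    ∀ p : ZMod Nx × ZMod Ny,
      m ≤ W1x (W1y ω) p
          - lam1 * ((Gp p + Gm p) - (Gp (p.1 - 1, p.2) + Gm (p.1 - 1, p.2)))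
          - lam2 * ((Hp p + Hm p) - (Hp (p.1, p.2 - 1) + Hm (p.1, p.2 - 1))) ∧
        W1x (W1y ω) p
          - lam1 * ((Gp p + Gm p) - (Gp (p.1 - 1, p.2) + Gm (p.1 - 1, p.2)))
          - lam2 * ((Hp p + Hm p) - (Hp (p.1, p.2 - 1) + Hm (p.1, p.2 - 1))) ≤ M := by
  have hlow := aux_lower lam1 lam2 hlam1 hlam2 m up um vp vm ω hup hum hvp hvm
    (fun q => (hω q).1) hCFL1 hCFL2 hdivfree Gp Gm Hp Hm hGp hGm hHp hHm
  -- negation lemmas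
  have negWW : ∀ q : ZMod Nx × ZMod Ny, W1x (W1y (fun r => -ω r)) q = -(W1x (W1y ω) q) := by
    intro q; simp only [W1x, W1y]; ring
  have negFxup : ∀ q : ZMod Nx × ZMod Ny,
      fluxX (had up (fun r => -ω r)) q = -(fluxX (had up ω) q) := by
    intro q; simp only [fluxX, W1y, had]; ring
  have negFxum : ∀ q : ZMod Nx × ZMod Ny,
      fluxX (had um (fun r => -ω r)) q = -(fluxX (had um ω) q) := by
    intro q; simp only [fluxX, W1y, had]; ring
  have negFyvp : ∀ q : ZMod Nx × ZMod Ny,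
      fluxY (had vp (fun r => -ω r)) q = -(fluxY (had vp ω) q) := by
    intro q; simp only [fluxY, W1x, had]; ring
  have negFyvm : ∀ q : ZMod Nx × ZMod Ny,
      fluxY (had vm (fun r => -ω r)) q = -(fluxY (had vm ω) q) := by
    intro q; simp only [fluxY, W1x, had]; ring
  have hω' : ∀ q : ZMod Nx × ZMod Ny, -M ≤ -ω q := fun q => neg_le_neg (hω q).2
  have hGp' : ∀ q : ZMod Nx × ZMod Ny,
      min (fluxX (had up (fun r => -ω r)) q) (fluxX up q * W1x (W1y (fun r => -ω r)) q) ≤ -Gp q ∧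
      -Gp q ≤ max (fluxX (had up (fun r => -ω r)) q)
        (fluxX up q * W1x (W1y (fun r => -ω r)) q) := by
    intro q
    rw [negFxup q, negWW q, mul_neg, min_neg_neg, max_neg_neg]
    exact ⟨neg_le_neg (hGp q).2, neg_le_neg (hGp q).1⟩
  have hGm' : ∀ q : ZMod Nx × ZMod Ny,
      min (fluxX (had um (fun r => -ω r)) q)
        (fluxX um q * W1x (W1y (fun r => -ω r)) (q.1 + 1, q.2)) ≤ -Gm q ∧
      -Gm q ≤ max (fluxX (had um (fun r => -ω r)) q)
        (fluxX um q * W1x (W1y (fun r => -ω r)) (q.1 + 1, q.2)) := by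
    intro q
    rw [negFxum q, negWW (q.1 + 1, q.2), mul_neg, min_neg_neg, max_neg_neg]
    exact ⟨neg_le_neg (hGm q).2, neg_le_neg (hGm q).1⟩
  have hHp' : ∀ q : ZMod Nx × ZMod Ny,
      min (fluxY (had vp (fun r => -ω r)) q) (fluxY vp q * W1x (W1y (fun r => -ω r)) q) ≤ -Hp q ∧
      -Hp q ≤ max (fluxY (had vp (fun r => -ω r)) q)
        (fluxY vp q * W1x (W1y (fun r => -ω r)) q) := by
    intro q
    rw [negFyvp q, negWW q, mul_neg, min_neg_neg, max_neg_neg]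
    exact ⟨neg_le_neg (hHp q).2, neg_le_neg (hHp q).1⟩
  have hHm' : ∀ q : ZMod Nx × ZMod Ny,
      min (fluxY (had vm (fun r => -ω r)) q)
        (fluxY vm q * W1x (W1y (fun r => -ω r)) (q.1, q.2 + 1)) ≤ -Hm q ∧
      -Hm q ≤ max (fluxY (had vm (fun r => -ω r)) q)
        (fluxY vm q * W1x (W1y (fun r => -ω r)) (q.1, q.2 + 1)) := by
    intro q
    rw [negFyvm q, negWW (q.1, q.2 + 1), mul_neg, min_neg_neg, max_neg_neg]
    exact ⟨neg_le_neg (hHm q).2, neg_le_neg (hHm q).1⟩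
  have hhigh := aux_lower lam1 lam2 hlam1 hlam2 (-M) up um vp vm (fun r => -ω r)
    hup hum hvp hvm hω' hCFL1 hCFL2 hdivfree
    (fun q => -Gp q) (fun q => -Gm q) (fun q => -Hp q) (fun q => -Hm q)
    hGp' hGm' hHp' hHm'
  intro p
  refine ⟨hlow p, ?_⟩
  have h := hhigh p
  simp only [negWW p] at h
  
  linarith
end
end

section
/- Let a ≥ 2 and let u_{i−1}, u_i, u_{i+1}, m be real numbers such that (u_{i−1} + a·u_i + u_{i+1})/(a+2) ≥ m and u_i < m. Then the surplus of the two neighbors suffices to absorb the undershoot: max(u_{i−1} − m, 0) + max(u_{i+1} − m, 0) ≥ m − u_i. -/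
/-- Feasibility of the undershoot correction in the three-point-stencil
bound-preserving limiter: if the weighted average `(u_{i−1} + a·u_i + u_{i+1})/(a+2)`
with `a ≥ 2` is at least `m` while `u_i < m`, then the surplus above `m` of the
two neighbors is at least the deficit `m − u_i`. -/
theorem undershoot_feasibility (a uim ui uip m : ℝ) (ha : 2 ≤ a)
    (havg : m ≤ (uim + a * ui + uip) / (a + 2)) (hui : ui < m) :
    m - ui ≤ max (uim - m) 0 + max (uip - m) 0 := by
  have hpos : (0:ℝ) < a + 2 := by linarith
  have key : m * (a + 2) ≤ uim + a * ui + uip := (le_div_iff₀ hpos).mp havg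
  nlinarith [le_max_left (uim - m) 0, le_max_left (uip - m) 0,
    mul_nonneg (sub_nonneg.mpr ha) (sub_nonneg.mpr hui.le)]
end

section
/- Let a ≥ 2 and let u_{i−1}, u_i, u_{i+1}, M be real numbers such that (u_{i−1} + a·u_i + u_{i+1})/(a+2) ≤ M and u_i > M. Then the capacity of the two neighbors suffices to absorb the overshoot: max(M − u_{i−1}, 0) + max(M − u_{i+1}, 0) ≥ u_i − M. -/
/-- Feasibility of the overshoot correction in the three-point-stencil
bound-preserving limiter: if the weighted average `(u_{i−1} + a·u_i + u_{i+1})/(a+2)`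
with `a ≥ 2` is at most `M` while `u_i > M`, then the room below `M` of the two
neighbors is at least the excess `u_i − M`. -/
theorem overshoot_feasibility (a uim ui uip M : ℝ) (ha : 2 ≤ a)
    (havg : (uim + a * ui + uip) / (a + 2) ≤ M) (hui : M < ui) :
    ui - M ≤ max (M - uim) 0 + max (M - uip) 0 := by
  have h2 : (0:ℝ) < a + 2 := by linarith
  have h3 : uim + a * ui + uip ≤ (a + 2) * M := by
    have := (div_le_iff₀ h2).mp havg; linarith
  have h4 : M - uim ≤ max (M - uim) 0 := le_max_left _ _
  have h5 : M - uip ≤ max (M - uip) 0 := le_max_left _ _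
  nlinarith [mul_le_mul_of_nonneg_right ha (le_of_lt (sub_pos.mpr hui))]
end

section
/- Let ι be a type, F : (ι → ℝ) → (ι → ℝ), Δt ≥ 0 and m ≤ M reals. Assume the forward Euler step preserves bounds: for every w : ι → ℝ with m ≤ w(x) ≤ M for all x, one has m ≤ w(x) + Δt·F(w)(x) ≤ M for all x. Let u : ι → ℝ satisfy m ≤ u(x) ≤ M for all x, and define the SSPRK(3,3) (Shu–Osher) update: u² = u + Δt·F(u), u³ = (3/4)·u + (1/4)·(u² + Δt·F(u²)), u⁺ = (1/3)·u + (2/3)·(u³ + Δt·F(u³)). Then m ≤ u⁺(x) ≤ M for all x. -/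
lemma convex_combo_mem (a b m M t : ℝ) (ht0 : 0 ≤ t) (ht1 : t ≤ 1)
    (ha : m ≤ a ∧ a ≤ M) (hb : m ≤ b ∧ b ≤ M) :
    m ≤ (1 - t) * a + t * b ∧ (1 - t) * a + t * b ≤ M := by
  constructor
  · nlinarith [ha.1, hb.1]
  · nlinarith [ha.2, hb.2]

/-- If the forward Euler step `w ↦ w + Δt·F(w)` preserves the bounds `[m, M]`,
then so does the SSPRK(3,3) (Shu–Osher) update. -/
theorem ssprk33_bound_preserving {ι : Type*} (F : (ι → ℝ) → (ι → ℝ))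
    (dt : ℝ) (hdt : 0 ≤ dt) (m M : ℝ) (hmM : m ≤ M)
    (hFE : ∀ w : ι → ℝ, (∀ x, m ≤ w x ∧ w x ≤ M) →
      ∀ x, m ≤ w x + dt * F w x ∧ w x + dt * F w x ≤ M)
    (u : ι → ℝ) (hu : ∀ x, m ≤ u x ∧ u x ≤ M) :
    let u2 : ι → ℝ := fun x => u x + dt * F u x
    let u3 : ι → ℝ := fun x => (3 / 4) * u x + (1 / 4) * (u2 x + dt * F u2 x)
    let up : ι → ℝ := fun x => (1 / 3) * u x + (2 / 3) * (u3 x + dt * F u3 x)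
    ∀ x, m ≤ up x ∧ up x ≤ M := by
  intro u2 u3 up
  have hu2 : ∀ x, m ≤ u2 x ∧ u2 x ≤ M := hFE u hu
  have hu2' := hFE u2 hu2
  have hu3 : ∀ x, m ≤ u3 x ∧ u3 x ≤ M := by
    intro x
    have := convex_combo_mem (u x) (u2 x + dt * F u2 x) m M (1/4)
      (by norm_num) (by norm_num) (hu x) (hu2' x)
    have h14 : (1:ℝ) - 1/4 = 3/4 := by norm_num
    rw [h14] at this
    simpa [u3] using this
  have hu3' := hFE u3 hu3
  intro x
  have := convex_combo_mem (u x) (u3 x + dt * F u3 x) m M (2/3)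
    (by norm_num) (by norm_num) (hu x) (hu3' x)
  have h23 : (1:ℝ) - 2/3 = 1/3 := by norm_num
  rw [h23] at this
  simpa [up] using this
end

section
/- Let h > 0, x ∈ ℝ, and let f : ℝ → ℝ be five times differentiable on [x−h, x+h] with |f⁽⁵⁾(t)| ≤ K for all t ∈ [x−h, x+h]. Then the fourth-order compact finite difference approximation of the first derivative satisfies: |(1/6)·(f′(x−h) + 4f′(x) + f′(x+h)) − (f(x+h) − f(x−h))/(2h)| ≤ K·h⁴/45. -/
open Set Finset

/-- Taylor's theorem with Lagrange remainder bound, for an explicit chain of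
derivatives on `[0, b]`. -/
lemma taylor_chain_bound {n : ℕ} {b K : ℝ} (hb : 0 < b) (g : ℕ → ℝ → ℝ)
    (hg : ∀ k ≤ n, ∀ t ∈ Set.Icc (0:ℝ) b, HasDerivAt (g k) (g (k+1) t) t)
    (hK : ∀ t ∈ Set.Icc (0:ℝ) b, |g (n+1) t| ≤ K) :
    |g 0 b - ∑ k ∈ Finset.range (n+1), b ^ k / (k.factorial : ℝ) * g k 0|
      ≤ K * b ^ (n+1) / ((n+1).factorial : ℝ) := by
  set s := Set.Icc (0:ℝ) b with hs_def
  have hs : UniqueDiffOn ℝ s := uniqueDiffOn_Icc hb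
  have hiter : ∀ k, k ≤ n + 1 → ∀ t ∈ s, iteratedDerivWithin k (g 0) s t = g k t := by
    intro k
    induction k with
    | zero => intro _ t ht; simp
    | succ k ih =>
      intro hk t ht
      have hk' : k ≤ n := by omega
      have ih' := ih (by omega)
      rw [iteratedDerivWithin_succ]
      have hder : HasDerivWithinAt (iteratedDerivWithin k (g 0) s) (g (k+1) t) s t := by
        refine ((hg k hk' t ht).hasDerivWithinAt).congr ?_ (ih' t ht)
        intro y hy; exact (ih' y hy)
      exact hder.derivWithin (hs t ht)
  have hcont : ContDiffOn ℝ n (g 0) s := by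
    apply contDiffOn_of_differentiableOn_deriv
    intro m hm t ht
    have hm' : m ≤ n := by exact_mod_cast hm
    have hd : DifferentiableWithinAt ℝ (g m) s t :=
      (hg m hm' t ht).hasDerivWithinAt.differentiableWithinAt
    exact hd.congr (fun y hy => hiter m (by omega) y hy) (hiter m (by omega) t ht)
  have hdIoo : DifferentiableOn ℝ (iteratedDerivWithin n (g 0) s) (Set.Ioo 0 b) := by
    intro t ht
    have hts : t ∈ s := Set.mem_Icc_of_Ioo ht
    have hd : DifferentiableWithinAt ℝ (g n) (Set.Ioo 0 b) t :=
      ((hg n le_rfl t hts).differentiableAt).differentiableWithinAt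
    exact hd.congr (fun y hy => hiter n (by omega) y (Set.mem_Icc_of_Ioo hy))
      (hiter n (by omega) t hts)
  have huI : Set.uIcc 0 b = s := Set.uIcc_of_le hb.le
  have huIoo : Set.uIoo 0 b = Set.Ioo 0 b := by simp [Set.uIoo, hb.le]
  obtain ⟨c, hc, hrem⟩ := taylor_mean_remainder_lagrange hb.ne (by rwa [huI]) (by rwa [huI, huIoo])
  rw [huI] at hrem
  rw [huIoo] at hc
  have h0s : (0:ℝ) ∈ s := ⟨le_refl 0, hb.le⟩
  have hcs : c ∈ s := Set.mem_Icc_of_Ioo hc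
  have hsum : taylorWithinEval (g 0) n s 0 b
      = ∑ k ∈ Finset.range (n+1), b ^ k / (k.factorial : ℝ) * g k 0 := by
    rw [taylor_within_apply]
    refine Finset.sum_congr rfl fun k _ => ?_
    rw [hiter k (by
      simp only [Finset.mem_range] at *
      omega) 0 h0s]
    simp only [smul_eq_mul, sub_zero]
    ring
  rw [hsum] at hrem
  rw [hrem, hiter (n+1) le_rfl c hcs]
  rw [abs_div, abs_mul, sub_zero]
  have h1 : |b ^ (n+1)| = b ^ (n+1) := abs_of_pos (pow_pos hb _)
  have h2 : |((n+1).factorial : ℝ)| = ((n+1).factorial : ℝ) := abs_of_pos (by positivity)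
  rw [h1, h2]
  gcongr
  exact hK c hcs

/-- Truncation error of the fourth-order compact finite difference formula for
the first derivative: if `f` is five times differentiable on `[x−h, x+h]` with
`|f⁽⁵⁾| ≤ K` there, then
`|(1/6)(f′(x−h) + 4f′(x) + f′(x+h)) − (f(x+h) − f(x−h))/(2h)| ≤ K·h⁴/45`. -/
theorem compact_fd_first_deriv_truncation_error (h x K : ℝ) (hh : 0 < h)
    (f : ℝ → ℝ)
    (hdiff : ∀ i < 5, ∀ t ∈ Set.Icc (x - h) (x + h),
      DifferentiableAt ℝ (iteratedDeriv i f) t)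
    (hK : ∀ t ∈ Set.Icc (x - h) (x + h), |iteratedDeriv 5 f t| ≤ K) :
    |(1 / 6) * (deriv f (x - h) + 4 * deriv f x + deriv f (x + h))
      - (f (x + h) - f (x - h)) / (2 * h)| ≤ K * h ^ 4 / 45 := by
  have hD : ∀ k < 5, ∀ t ∈ Set.Icc (x - h) (x + h),
      HasDerivAt (iteratedDeriv k f) (iteratedDeriv (k+1) f t) t := by
    intro k hk t ht
    have hd := (hdiff k hk t ht).hasDerivAt
    rw [iteratedDeriv_succ]
    exact hd
  set F : ℕ → ℝ → ℝ := fun k t =>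
    iteratedDeriv k f (x + t) - (-1:ℝ)^k * iteratedDeriv k f (x - t) with hF_def
  set G : ℕ → ℝ → ℝ := fun k t =>
    iteratedDeriv (k+1) f (x + t) + (-1:ℝ)^k * iteratedDeriv (k+1) f (x - t) with hG_def
  have hmem : ∀ t ∈ Set.Icc (0:ℝ) h,
      x + t ∈ Set.Icc (x - h) (x + h) ∧ x - t ∈ Set.Icc (x - h) (x + h) := by
    intro t ht
    obtain ⟨h1, h2⟩ := ht
    constructor <;> constructor <;> linarith
  have hFd : ∀ k ≤ 4, ∀ t ∈ Set.Icc (0:ℝ) h, HasDerivAt (F k) (F (k+1) t) t := by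
    intro k hk t ht
    obtain ⟨hm1, hm2⟩ := hmem t ht
    have h1 : HasDerivAt (fun t => iteratedDeriv k f (x + t))
        (iteratedDeriv (k+1) f (x + t) * 1) t :=
      (hD k (by omega) (x + t) hm1).comp t ((hasDerivAt_id t).const_add x)
    have h2 : HasDerivAt (fun t => iteratedDeriv k f (x - t))
        (iteratedDeriv (k+1) f (x - t) * (-1)) t :=
      (hD k (by omega) (x - t) hm2).comp t ((hasDerivAt_id t).const_sub x)
    have := h1.sub (h2.const_mul ((-1:ℝ)^k))
    convert this using 1
    any_goals rfl
    change iteratedDeriv (k+1) f (x + t) - (-1:ℝ)^(k+1) * iteratedDeriv (k+1) f (x - t) = _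
    ring
  have hGd : ∀ k ≤ 3, ∀ t ∈ Set.Icc (0:ℝ) h, HasDerivAt (G k) (G (k+1) t) t := by
    intro k hk t ht
    obtain ⟨hm1, hm2⟩ := hmem t ht
    have h1 : HasDerivAt (fun t => iteratedDeriv (k+1) f (x + t))
        (iteratedDeriv (k+2) f (x + t) * 1) t :=
      (hD (k+1) (by omega) (x + t) hm1).comp t ((hasDerivAt_id t).const_add x)
    have h2 : HasDerivAt (fun t => iteratedDeriv (k+1) f (x - t))
        (iteratedDeriv (k+2) f (x - t) * (-1)) t :=
      (hD (k+1) (by omega) (x - t) hm2).comp t ((hasDerivAt_id t).const_sub x)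
    have := h1.add (h2.const_mul ((-1:ℝ)^k))
    convert this using 1
    any_goals rfl
    change iteratedDeriv (k+1+1) f (x + t) + (-1:ℝ)^(k+1) * iteratedDeriv (k+1+1) f (x - t) = _
    ring
  have hFbound := taylor_chain_bound hh F hFd (K := 2 * K) (n := 4) (by
    intro t ht
    obtain ⟨hm1, hm2⟩ := hmem t ht
    have b1 := hK _ hm1
    have b2 := hK _ hm2
    simp only [hF_def]
    have : |iteratedDeriv 5 f (x + t) - (-1:ℝ)^5 * iteratedDeriv 5 f (x - t)|
        ≤ |iteratedDeriv 5 f (x + t)| + |iteratedDeriv 5 f (x - t)| := by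
      norm_num
      exact abs_add_le _ _
    linarith)
  have hGbound := taylor_chain_bound hh G hGd (K := 2 * K) (n := 3) (by
    intro t ht
    obtain ⟨hm1, hm2⟩ := hmem t ht
    have b1 := hK _ hm1
    have b2 := hK _ hm2
    simp only [hG_def]
    have : |iteratedDeriv 5 f (x + t) + (-1:ℝ)^4 * iteratedDeriv 5 f (x - t)|
        ≤ |iteratedDeriv 5 f (x + t)| + |iteratedDeriv 5 f (x - t)| := by
      norm_num
      exact abs_add_le _ _
    linarith)
  have hFsum : ∑ k ∈ Finset.range 5, h ^ k / (k.factorial : ℝ) * F k 0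
      = 2 * h * iteratedDeriv 1 f x + h^3 / 3 * iteratedDeriv 3 f x := by
    simp [Finset.sum_range_succ, hF_def, Nat.factorial]
    ring
  have hGsum : ∑ k ∈ Finset.range 4, h ^ k / (k.factorial : ℝ) * G k 0
      = 2 * iteratedDeriv 1 f x + h^2 * iteratedDeriv 3 f x := by
    simp [Finset.sum_range_succ, hG_def, Nat.factorial]
    ring
  rw [hFsum] at hFbound
  rw [hGsum] at hGbound
  have hF0 : F 0 h = f (x + h) - f (x - h) := by simp [hF_def]
  have hG0 : G 0 h = deriv f (x + h) + deriv f (x - h) := by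
    simp [hG_def, iteratedDeriv_one]
  have hd1 : iteratedDeriv 1 f x = deriv f x := by rw [iteratedDeriv_one]
  rw [hd1] at hFbound hGbound
  rw [hG0] at hGbound
  rw [hF0] at hFbound
  set A := deriv f (x + h) + deriv f (x - h)
    - (2 * deriv f x + h^2 * iteratedDeriv 3 f x) with hA
  set B := f (x + h) - f (x - h)
    - (2 * h * deriv f x + h^3 / 3 * iteratedDeriv 3 f x) with hB
  have hne : h ≠ 0 := ne_of_gt hh
  have key : (1 / 6) * (deriv f (x - h) + 4 * deriv f x + deriv f (x + h))
      - (f (x + h) - f (x - h)) / (2 * h)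
      = (1/6) * A - (1/(2*h)) * B := by
    rw [hA, hB]
    field_simp
    ring
  rw [key]
  have htri : |(1/6) * A - (1/(2*h)) * B| ≤ (1/6) * |A| + (1/(2*h)) * |B| := by
    calc |(1/6) * A - (1/(2*h)) * B| ≤ |(1/6) * A| + |(1/(2*h)) * B| := abs_sub _ _
    _ = (1/6) * |A| + (1/(2*h)) * |B| := by
        rw [abs_mul, abs_mul, abs_of_pos (by norm_num : (0:ℝ) < 1/6),
          abs_of_pos (by positivity : (0:ℝ) < 1/(2*h))]
  have e1 : ((3+1).factorial : ℝ) = 24 := by norm_num [Nat.factorial]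
  have e2 : ((4+1).factorial : ℝ) = 120 := by norm_num [Nat.factorial]
  rw [e1] at hGbound
  rw [e2] at hFbound
  have h1 : (1/6) * |A| ≤ (1/6) * (2 * K * h ^ 4 / 24) :=
    mul_le_mul_of_nonneg_left hGbound (by norm_num)
  have h2 : (1/(2*h)) * |B| ≤ (1/(2*h)) * (2 * K * h ^ 5 / 120) :=
    mul_le_mul_of_nonneg_left hFbound (by positivity)
  have h3 : (1/(2*h)) * (2 * K * h ^ 5 / 120) = K * h^4 / 120 := by
    field_simp
  rw [h3] at h2
  have h4 : (1/6) * (2 * K * h ^ 4 / 24) = K * h^4 / 72 := by ring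
  rw [h4] at h1
  have : K * h^4/72 + K * h^4/120 = K * h^4/45 := by ring
  linarith
end

section
/- Let h > 0, x ∈ ℝ, and let f : ℝ → ℝ be six times differentiable on [x−h, x+h] with |f⁽⁶⁾(t)| ≤ K for all t ∈ [x−h, x+h]. Then the fourth-order compact finite difference approximation of the second derivative satisfies: |(1/12)·(f″(x−h) + 10f″(x) + f″(x+h)) − (f(x+h) − 2f(x) + f(x−h))/h²| ≤ 7·K·h⁴/720. -/
open Set Finset

lemma myIterWithinEq (f : ℝ → ℝ) (s : Set ℝ) (hs : UniqueDiffOn ℝ s) (m : ℕ)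
    (hdiff : ∀ i < m, ∀ t ∈ s, DifferentiableAt ℝ (iteratedDeriv i f) t) :
    ∀ t ∈ s, iteratedDerivWithin m f s t = iteratedDeriv m f t := by
  induction m with
  | zero => intro t ht; simp
  | succ m ih =>
    intro t ht
    have ihm := ih (fun i hi => hdiff i (Nat.lt_succ_of_lt hi))
    rw [iteratedDerivWithin_succ]
    have : derivWithin (iteratedDerivWithin m f s) s t
        = derivWithin (iteratedDeriv m f) s t :=
      derivWithin_congr (fun y hy => ihm y hy) (ihm t ht)
    rw [this, (hdiff m (Nat.lt_succ_self m) t ht).derivWithin (hs t ht),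
      ← iteratedDeriv_succ]

lemma myTaylorRight (f : ℝ → ℝ) (n : ℕ) (a d K : ℝ) (hd : 0 < d)
    (hdiff : ∀ i ≤ n, ∀ t ∈ Set.Icc a (a + d), DifferentiableAt ℝ (iteratedDeriv i f) t)
    (hK : ∀ t ∈ Set.Icc a (a + d), |iteratedDeriv (n + 1) f t| ≤ K) :
    |f (a + d) - ∑ k ∈ Finset.range (n + 1),
        (d ^ k / k.factorial) * iteratedDeriv k f a|
      ≤ K * d ^ (n + 1) / (n + 1).factorial := by
  have hab : a < a + d := by linarith
  have hs : UniqueDiffOn ℝ (Icc a (a + d)) := uniqueDiffOn_Icc hab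
  have heq : ∀ m ≤ n + 1, ∀ t ∈ Icc a (a + d),
      iteratedDerivWithin m f (Icc a (a + d)) t = iteratedDeriv m f t := by
    intro m hm t ht
    exact myIterWithinEq f _ hs m
      (fun i hi => hdiff i (by omega)) t ht
  have hcd : ContDiffOn ℝ n f (Icc a (a + d)) := by
    apply contDiffOn_of_differentiableOn_deriv
    intro m hm t ht
    have hm' : m ≤ n := by exact_mod_cast hm
    exact ((hdiff m hm' t ht).differentiableWithinAt).congr
      (fun y hy => heq m (by omega) y hy) (heq m (by omega) t ht)
  have hf' : DifferentiableOn ℝ (iteratedDerivWithin n f (Icc a (a + d)))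
      (Ioo a (a + d)) := by
    intro t ht
    have ht' : t ∈ Icc a (a + d) := Ioo_subset_Icc_self ht
    exact (((hdiff n le_rfl t ht').differentiableWithinAt).mono
      Ioo_subset_Icc_self).congr
      (fun y hy => heq n (by omega) y (Ioo_subset_Icc_self hy)) (heq n (by omega) t ht')
  obtain ⟨x', hx', hval⟩ := taylor_mean_remainder_lagrange (x := a + d) (x₀ := a) hab.ne
    (by rwa [Set.uIcc_of_le hab.le]) (by rwa [Set.uIcc_of_le hab.le, Set.uIoo_of_le hab.le])
  rw [Set.uIcc_of_le hab.le] at hval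
  rw [Set.uIoo_of_le hab.le] at hx'
  have hx'' : x' ∈ Icc a (a + d) := Ioo_subset_Icc_self hx'
  have hT : taylorWithinEval f n (Icc a (a + d)) a (a + d)
      = ∑ k ∈ Finset.range (n + 1), (d ^ k / k.factorial) * iteratedDeriv k f a := by
    rw [taylor_within_apply]
    refine Finset.sum_congr rfl fun k hk => ?_
    rw [heq k (by have := Finset.mem_range.mp hk; omega) a (left_mem_Icc.mpr hab.le)]
    simp only [smul_eq_mul, add_sub_cancel_left]
    ring
  rw [← hT, hval, heq (n + 1) le_rfl x' hx'']
  rw [abs_div, abs_mul, abs_pow, abs_of_pos (by linarith : (0:ℝ) < a + d - a),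
    abs_of_pos (by positivity : (0:ℝ) < ((n + 1).factorial : ℝ))]
  have hKnn : 0 ≤ K := le_trans (abs_nonneg _) (hK a (left_mem_Icc.mpr hab.le))
  have : a + d - a = d := by ring
  rw [this]
  gcongr
  exact hK x' hx''

lemma myIterRefl (f : ℝ → ℝ) (c : ℝ) (n : ℕ) (t : ℝ) :
    iteratedDeriv n (fun z => f (c - z)) t = (-1 : ℝ) ^ n * iteratedDeriv n f (c - t) := by
  have h1 : (fun z : ℝ => f (c - z)) = fun z => (fun w => f (c + w)) (-z) := by
    funext z; simp [sub_eq_add_neg]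
  rw [h1]
  rw [show (fun z => (fun w => f (c + w)) (-z)) = (fun z => (fun w => f (c + w)) (-z)) from rfl,
    iteratedDeriv_comp_neg n (fun w => f (c + w)) t, iteratedDeriv_comp_const_add, smul_eq_mul]
  norm_num [sub_eq_add_neg]

lemma myTaylorLeft (f : ℝ → ℝ) (n : ℕ) (a d K : ℝ) (hd : 0 < d)
    (hdiff : ∀ i ≤ n, ∀ t ∈ Set.Icc (a - d) a, DifferentiableAt ℝ (iteratedDeriv i f) t)
    (hK : ∀ t ∈ Set.Icc (a - d) a, |iteratedDeriv (n + 1) f t| ≤ K) :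
    |f (a - d) - ∑ k ∈ Finset.range (n + 1),
        ((-d) ^ k / k.factorial) * iteratedDeriv k f a|
      ≤ K * d ^ (n + 1) / (n + 1).factorial := by
  set g : ℝ → ℝ := fun z => f (2 * a - z) with hg
  have hmem : ∀ t ∈ Icc a (a + d), 2 * a - t ∈ Icc (a - d) a := by
    intro t ht
    simp only [Set.mem_Icc] at *
    constructor <;> linarith [ht.1, ht.2]
  have hiterg : ∀ m : ℕ, ∀ t : ℝ, iteratedDeriv m g t
      = (-1 : ℝ) ^ m * iteratedDeriv m f (2 * a - t) := fun m t => myIterRefl f (2 * a) m t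
  have hdiffg : ∀ i ≤ n, ∀ t ∈ Icc a (a + d), DifferentiableAt ℝ (iteratedDeriv i g) t := by
    intro i hi t ht
    have : iteratedDeriv i g = fun t => (-1 : ℝ) ^ i * iteratedDeriv i f (2 * a - t) :=
      funext (hiterg i)
    rw [this]
    exact ((hdiff i hi _ (hmem t ht)).comp t
      ((differentiableAt_const _).sub differentiableAt_id)).const_mul _
  have hKg : ∀ t ∈ Icc a (a + d), |iteratedDeriv (n + 1) g t| ≤ K := by
    intro t ht
    rw [hiterg, abs_mul, abs_pow, abs_neg, abs_one, one_pow, one_mul]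
    exact hK _ (hmem t ht)
  have := myTaylorRight g n a d K hd hdiffg hKg
  have e1 : g (a + d) = f (a - d) := by simp only [hg]; ring_nf
  have e2 : ∀ k ∈ Finset.range (n + 1), (d ^ k / (k.factorial : ℝ)) * iteratedDeriv k g a
      = ((-d) ^ k / k.factorial) * iteratedDeriv k f a := by
    intro k _
    rw [hiterg]
    have : (2 : ℝ) * a - a = a := by ring
    rw [this, neg_pow]
    ring
  rwa [e1, Finset.sum_congr rfl e2] at this

lemma myIterIter (f : ℝ → ℝ) (n m : ℕ) :
    iteratedDeriv n (iteratedDeriv m f) = iteratedDeriv (n + m) f := by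
  induction n with
  | zero => simp
  | succ n ih =>
    rw [iteratedDeriv_succ, ih, ← iteratedDeriv_succ, Nat.add_right_comm]

/-- Truncation error of the fourth-order compact finite difference formula for
the second derivative: if `f` is six times differentiable on `[x−h, x+h]` with
`|f⁽⁶⁾| ≤ K` there, then
`|(1/12)(f″(x−h) + 10f″(x) + f″(x+h)) − (f(x+h) − 2f(x) + f(x−h))/h²|
  ≤ 7·K·h⁴/720`. -/
theorem compact_fd_second_deriv_truncation_error (h x K : ℝ) (hh : 0 < h)
    (f : ℝ → ℝ)
    (hdiff : ∀ i < 6, ∀ t ∈ Set.Icc (x - h) (x + h),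
      DifferentiableAt ℝ (iteratedDeriv i f) t)
    (hK : ∀ t ∈ Set.Icc (x - h) (x + h), |iteratedDeriv 6 f t| ≤ K) :
    |(1 / 12) * (iteratedDeriv 2 f (x - h) + 10 * iteratedDeriv 2 f x
        + iteratedDeriv 2 f (x + h))
      - (f (x + h) - 2 * f x + f (x - h)) / h ^ 2| ≤ 7 * K * h ^ 4 / 720 := by
  have hsubR : Icc x (x + h) ⊆ Icc (x - h) (x + h) :=
    Icc_subset_Icc (by linarith) le_rfl
  have hsubL : Icc (x - h) x ⊆ Icc (x - h) (x + h) :=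
    Icc_subset_Icc le_rfl (by linarith)
  -- Taylor expansions of f to order 5
  have E1 := myTaylorRight f 5 x h K hh
    (fun i hi t ht => hdiff i (by omega) t (hsubR ht)) (fun t ht => hK t (hsubR ht))
  have E2 := myTaylorLeft f 5 x h K hh
    (fun i hi t ht => hdiff i (by omega) t (hsubL ht)) (fun t ht => hK t (hsubL ht))
  -- Taylor expansions of f'' to order 3
  have hg : ∀ i : ℕ, iteratedDeriv i (iteratedDeriv 2 f) = iteratedDeriv (i + 2) f :=
    fun i => myIterIter f i 2
  have F1 := myTaylorRight (iteratedDeriv 2 f) 3 x h K hh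
    (fun i hi t ht => by rw [hg]; exact hdiff (i + 2) (by omega) t (hsubR ht))
    (fun t ht => by rw [hg]; exact hK t (hsubR ht))
  have F2 := myTaylorLeft (iteratedDeriv 2 f) 3 x h K hh
    (fun i hi t ht => by rw [hg]; exact hdiff (i + 2) (by omega) t (hsubL ht))
    (fun t ht => by rw [hg]; exact hK t (hsubL ht))
  simp only [Finset.sum_range_succ, Finset.sum_range_zero, hg] at E1 E2 F1 F2
  norm_num [Nat.factorial] at E1 E2 F1 F2
  set A1 := f (x + h) - (f x + h * deriv f x + h ^ 2 / 2 * iteratedDeriv 2 f x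
    + h ^ 3 / 6 * iteratedDeriv 3 f x + h ^ 4 / 24 * iteratedDeriv 4 f x
    + h ^ 5 / 120 * iteratedDeriv 5 f x) with hA1
  set A2 := f (x - h) - (f x + -(h * deriv f x) + h ^ 2 / 2 * iteratedDeriv 2 f x
    + (-h) ^ 3 / 6 * iteratedDeriv 3 f x + (-h) ^ 4 / 24 * iteratedDeriv 4 f x
    + (-h) ^ 5 / 120 * iteratedDeriv 5 f x) with hA2
  set B1 := iteratedDeriv 2 f (x + h) - (iteratedDeriv 2 f x + h * iteratedDeriv 3 f x
    + h ^ 2 / 2 * iteratedDeriv 4 f x + h ^ 3 / 6 * iteratedDeriv 5 f x) with hB1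
  set B2 := iteratedDeriv 2 f (x - h) - (iteratedDeriv 2 f x + -(h * iteratedDeriv 3 f x)
    + h ^ 2 / 2 * iteratedDeriv 4 f x + (-h) ^ 3 / 6 * iteratedDeriv 5 f x) with hB2
  have h2 : (0:ℝ) < h ^ 2 := by positivity
  have hne : h ≠ 0 := ne_of_gt hh
  have key : 1 / 12 * (iteratedDeriv 2 f (x - h) + 10 * iteratedDeriv 2 f x
        + iteratedDeriv 2 f (x + h)) - (f (x + h) - 2 * f x + f (x - h)) / h ^ 2
      = B1 / 12 + B2 / 12 - A1 / h ^ 2 - A2 / h ^ 2 := by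
    rw [hA1, hA2, hB1, hB2]
    field_simp
    ring
  rw [key]
  have c1 : |A1 / h ^ 2| ≤ K * h ^ 4 / 720 := by
    rw [abs_div, abs_of_pos h2]
    have : |A1| / h ^ 2 ≤ (K * h ^ 6 / 720) / h ^ 2 := by gcongr
    calc |A1| / h ^ 2 ≤ (K * h ^ 6 / 720) / h ^ 2 := this
      _ = K * h ^ 4 / 720 := by field_simp
  have c2 : |A2 / h ^ 2| ≤ K * h ^ 4 / 720 := by
    rw [abs_div, abs_of_pos h2]
    calc |A2| / h ^ 2 ≤ (K * h ^ 6 / 720) / h ^ 2 := by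
          gcongr; rw [hA2, show (-h) ^ 4 = h ^ 4 by ring]; exact E2
      _ = K * h ^ 4 / 720 := by field_simp
  obtain ⟨d1, d1'⟩ := abs_le.mp c1
  obtain ⟨d2, d2'⟩ := abs_le.mp c2
  obtain ⟨e1, e1'⟩ := abs_le.mp F1
  obtain ⟨e2, e2'⟩ := abs_le.mp F2
  rw [abs_le]
  constructor <;> linarith
end

section
/- Let h > 0, x ∈ ℝ, and let f : ℝ → ℝ be five times differentiable on [x, x+4h] with |f⁽⁵⁾(t)| ≤ K for all t ∈ [x, x+4h]. Then the fourth-order one-sided finite difference approximation of the first derivative satisfies: |f′(x) − (−25f(x) + 48f(x+h) − 36f(x+2h) + 16f(x+3h) − 3f(x+4h))/(12h)| ≤ (17/3)·K·h⁴. -/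
set_option maxHeartbeats 1000000 in
/-- Truncation error of the fourth-order one-sided finite difference formula
for the first derivative: if `f` is five times differentiable on `[x, x+4h]`
with `|f⁽⁵⁾| ≤ K` there, then
`|f′(x) − (−25f(x) + 48f(x+h) − 36f(x+2h) + 16f(x+3h) − 3f(x+4h))/(12h)|
  ≤ (17/3)·K·h⁴`. -/
theorem one_sided_fd_first_deriv_truncation_error (h x K : ℝ) (hh : 0 < h)
    (f : ℝ → ℝ)
    (hdiff : ∀ i < 5, ∀ t ∈ Set.Icc x (x + 4 * h),
      DifferentiableAt ℝ (iteratedDeriv i f) t)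
    (hK : ∀ t ∈ Set.Icc x (x + 4 * h), |iteratedDeriv 5 f t| ≤ K) :
    |deriv f x - (-25 * f x + 48 * f (x + h) - 36 * f (x + 2 * h)
        + 16 * f (x + 3 * h) - 3 * f (x + 4 * h)) / (12 * h)|
      ≤ (17 / 3) * K * h ^ 4 := by
  have hK0 : 0 ≤ K := le_trans (abs_nonneg _) (hK x ⟨le_rfl, by linarith⟩)
  -- On any subinterval, iteratedDerivWithin agrees with iteratedDeriv
  have key : ∀ b : ℝ, x < b → b ≤ x + 4 * h → ∀ i, i ≤ 5 →
      Set.EqOn (iteratedDerivWithin i f (Set.Icc x b)) (iteratedDeriv i f)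
        (Set.Icc x b) := by
    intro b hxb hb4 i
    have hsub : Set.Icc x b ⊆ Set.Icc x (x + 4 * h) := Set.Icc_subset_Icc le_rfl hb4
    induction i with
    | zero => intro _ t ht; simp [iteratedDerivWithin_zero]
    | succ n ih =>
      intro hn t ht
      have hu := (uniqueDiffOn_Icc hxb) t ht
      rw [iteratedDerivWithin_succ, iteratedDeriv_succ,
        derivWithin_congr (ih (by omega)) (ih (by omega) ht),
        (hdiff n (by omega) t (hsub ht)).derivWithin hu]
  -- Taylor expansion with Lagrange remainder on [x, x+k*h]
  have taylor : ∀ k : ℝ, 0 < k → k ≤ 4 → ∃ ξ ∈ Set.Ioo x (x + k * h),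
      f (x + k * h) = f x + (k * h) * deriv f x
        + (k * h) ^ 2 / 2 * iteratedDeriv 2 f x
        + (k * h) ^ 3 / 6 * iteratedDeriv 3 f x
        + (k * h) ^ 4 / 24 * iteratedDeriv 4 f x
        + iteratedDeriv 5 f ξ * (k * h) ^ 5 / 120 := by
    intro k hk hk4
    have hxb : x < x + k * h := by nlinarith
    have hb4 : x + k * h ≤ x + 4 * h := by nlinarith
    have hsub : Set.Icc x (x + k * h) ⊆ Set.Icc x (x + 4 * h) :=
      Set.Icc_subset_Icc le_rfl hb4
    have hcd : ContDiffOn ℝ 4 f (Set.Icc x (x + k * h)) := by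
      apply contDiffOn_of_differentiableOn_deriv
      intro m hm
      have hm4 : m ≤ 4 := by exact_mod_cast hm
      have hm5 : m ≤ 5 := by omega
      have hm5' : m < 5 := by omega
      intro t ht
      exact ((hdiff m hm5' t (hsub ht)).differentiableWithinAt).congr
        (fun u hu => key _ hxb hb4 m hm5 hu) (key _ hxb hb4 m hm5 ht)
    have hdo : DifferentiableOn ℝ
        (iteratedDerivWithin 4 f (Set.Icc x (x + k * h))) (Set.Ioo x (x + k * h)) := by
      intro t ht
      have ht' : t ∈ Set.Icc x (x + k * h) := Set.Ioo_subset_Icc_self ht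
      exact (((hdiff 4 (by norm_num) t (hsub ht')).differentiableWithinAt).congr
        (fun u hu => key _ hxb hb4 4 (by norm_num) hu)
        (key _ hxb hb4 4 (by norm_num) ht')).mono Set.Ioo_subset_Icc_self
    obtain ⟨ξ, hξ, heq⟩ := taylor_mean_remainder_lagrange (n := 4) (ne_of_lt hxb)
      (by rw [Set.uIcc_of_le hxb.le]; exact_mod_cast hcd)
      (by rw [Set.uIcc_of_le hxb.le, Set.uIoo_of_le hxb.le]; exact hdo)
    rw [Set.uIcc_of_le hxb.le] at heq
    rw [Set.uIoo_of_le hxb.le] at hξ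
    refine ⟨ξ, hξ, ?_⟩
    rw [taylor_within_apply] at heq
    have hx0 : x ∈ Set.Icc x (x + k * h) := ⟨le_rfl, le_of_lt hxb⟩
    have hξ' : ξ ∈ Set.Icc x (x + k * h) := Set.Ioo_subset_Icc_self hξ
    simp only [Finset.sum_range_succ, Finset.sum_range_zero,
      key _ hxb hb4 0 (by norm_num) hx0, key _ hxb hb4 1 (by norm_num) hx0,
      key _ hxb hb4 2 (by norm_num) hx0, key _ hxb hb4 3 (by norm_num) hx0,
      key _ hxb hb4 4 (by norm_num) hx0, key _ hxb hb4 5 (by norm_num) hξ'] at heq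
    simp only [iteratedDeriv_zero, smul_eq_mul] at heq
    norm_num [Nat.factorial] at heq
    linear_combination heq
  obtain ⟨ξ1, hξ1, e1⟩ := taylor 1 (by norm_num) (by norm_num)
  obtain ⟨ξ2, hξ2, e2⟩ := taylor 2 (by norm_num) (by norm_num)
  obtain ⟨ξ3, hξ3, e3⟩ := taylor 3 (by norm_num) (by norm_num)
  obtain ⟨ξ4, hξ4, e4⟩ := taylor 4 (by norm_num) (by norm_num)
  have hr1 := hK ξ1 ⟨le_of_lt hξ1.1, by nlinarith [hξ1.2]⟩
  have hr2 := hK ξ2 ⟨le_of_lt hξ2.1, by nlinarith [hξ2.2]⟩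
  have hr3 := hK ξ3 ⟨le_of_lt hξ3.1, by nlinarith [hξ3.2]⟩
  have hr4 := hK ξ4 ⟨le_of_lt hξ4.1, by nlinarith [hξ4.2]⟩
  set r1 := iteratedDeriv 5 f ξ1
  set r2 := iteratedDeriv 5 f ξ2
  set r3 := iteratedDeriv 5 f ξ3
  set r4 := iteratedDeriv 5 f ξ4
  have e1' : f (x + h) = f x + h * deriv f x
      + h ^ 2 / 2 * iteratedDeriv 2 f x + h ^ 3 / 6 * iteratedDeriv 3 f x
      + h ^ 4 / 24 * iteratedDeriv 4 f x + r1 * h ^ 5 / 120 := by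
    have : x + h = x + 1 * h := by ring
    rw [this, e1]; ring
  have hcomb : -25 * f x + 48 * f (x + h) - 36 * f (x + 2 * h)
        + 16 * f (x + 3 * h) - 3 * f (x + 4 * h)
      = 12 * h * deriv f x
        + (48 * r1 - 1152 * r2 + 3888 * r3 - 3072 * r4) * h ^ 5 / 120 := by
    rw [e1', e2, e3, e4]; ring
  have hE : deriv f x - (-25 * f x + 48 * f (x + h) - 36 * f (x + 2 * h)
        + 16 * f (x + 3 * h) - 3 * f (x + 4 * h)) / (12 * h)
      = (-48 * r1 + 1152 * r2 - 3888 * r3 + 3072 * r4) * h ^ 4 / 1440 := by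
    rw [hcomb]
    field_simp
    ring
  rw [hE]
  have h1 := abs_le.mp hr1
  have h2 := abs_le.mp hr2
  have h3 := abs_le.mp hr3
  have h4 := abs_le.mp hr4
  have hsum : |(-48 * r1 + 1152 * r2 - 3888 * r3 + 3072 * r4)| ≤ 8160 * K := by
    rw [abs_le]; constructor <;> linarith [h1.1, h1.2, h2.1, h2.2, h3.1, h3.2, h4.1, h4.2]
  have hpow : (0:ℝ) < h ^ 4 := pow_pos hh 4
  rw [abs_div, abs_mul, abs_of_pos hpow]
  rw [show |(1440:ℝ)| = 1440 by norm_num]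
  rw [div_le_iff₀ (by norm_num)]
  nlinarith [abs_nonneg (-48 * r1 + 1152 * r2 - 3888 * r3 + 3072 * r4)]
end
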